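/- arXiv:2411.19776 — 11 statements merged into one kernel-verified Lean document; each statement's English description precedes it below -/
import Mathlib

section
/- Let G be a path-connected topological group acting continuously by homeomorphisms on a Hausdorff topological space X. If A ⊆ X is a subset whose topological frontier ∂A is compact, then for every g ∈ G the symmetric difference A △ (g·A) is relatively compact, i.e., its closure in X is compact. -/
open MeasureTheory Set Pointwise

/-!
Join `1` to `g` by a path `γ`. If `x` lies in exactly one of `A` and `g • A`, then the path
`t ↦ (γ t)⁻¹ • x` starts on one side of `A` and ends on the other, so it crosses `frontier A`;
hence `x ∈ γ t • frontier A` for some `t`. Thus `A ∆ g • A` lies in the compact set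
`range γ • frontier A`, and its closure is compact.
-/

lemma exists_apply_mem_frontier {Y X : Type*} [TopologicalSpace Y] [PreconnectedSpace Y]
    [TopologicalSpace X] {f : Y → X} (hf : Continuous f) {A : Set X} {y₁ y₂ : Y}
    (h₁ : f y₁ ∈ A) (h₂ : f y₂ ∉ A) : ∃ y, f y ∈ frontier A := by
  obtain ⟨y, hy⟩ : (frontier (f ⁻¹' A)).Nonempty :=
    nonempty_frontier_iff.2 ⟨⟨y₁, h₁⟩, (ne_univ_iff_exists_notMem _).2 ⟨y₂, h₂⟩⟩
  exact ⟨y, hf.frontier_preimage_subset A hy⟩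

lemma symmDiff_smul_set_subset_range_smul_frontier {G X : Type*} [Group G] [TopologicalSpace G]
    [ContinuousInv G] [TopologicalSpace X] [MulAction G X] [ContinuousSMul G X]
    {a b : G} (γ : Path a b) (A : Set X) :
    symmDiff (a • A) (b • A) ⊆ range γ • frontier A := by
  intro x hx
  have hf : Continuous fun t => (γ t)⁻¹ • x := γ.continuous.inv.smul continuous_const
  have hcross : ∃ t, (γ t)⁻¹ • x ∈ frontier A := by
    rcases (mem_symmDiff.1 hx) with ⟨ha, hb⟩ | ⟨hb, ha⟩
    · exact exists_apply_mem_frontier hf (y₁ := 0) (y₂ := 1)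
        (by simpa [mem_smul_set_iff_inv_smul_mem] using ha)
        (by simpa [mem_smul_set_iff_inv_smul_mem] using hb)
    · exact exists_apply_mem_frontier hf (y₁ := 1) (y₂ := 0)
        (by simpa [mem_smul_set_iff_inv_smul_mem] using hb)
        (by simpa [mem_smul_set_iff_inv_smul_mem] using ha)
  obtain ⟨t, ht⟩ := hcross
  exact ⟨γ t, mem_range_self t, _, ht, smul_inv_smul (γ t) x⟩

theorem stmt0 {G X : Type*} [Group G] [TopologicalSpace G] [IsTopologicalGroup G]
    [PathConnectedSpace G]
    [TopologicalSpace X] [T2Space X] [MulAction G X] [ContinuousSMul G X]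
    (A : Set X) (hA : IsCompact (frontier A)) (g : G) :
    IsCompact (closure (symmDiff A (g • A))) := by
  obtain ⟨γ⟩ := PathConnectedSpace.joined (1 : G) g
  have hsub := symmDiff_smul_set_subset_range_smul_frontier γ A
  rw [one_smul] at hsub
  exact ((isCompact_range γ.continuous).smul_set hA).closure_of_subset hsub
end

section
/- Let G be a path-connected topological group acting continuously by homeomorphisms on a topological space X, let A ⊆ X, let g ∈ G, and let φ : [0,1] → G be a continuous path with φ(0) = e and φ(1) = g⁻¹. Then A \ (g·A) is contained in the set {φ(r)⁻¹·x : r ∈ [0,1], x ∈ ∂A}, which is the image of the compact set [0,1] × ∂A under the continuous map (r,x) ↦ φ(r)⁻¹·x; in particular, if ∂A is compact then A \ (g·A) is contained in a compact set. -/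
open MeasureTheory Set Pointwise

theorem Continuous.exists_mem_frontier_of_mem_of_notMem {Y X : Type*} [TopologicalSpace Y]
    [PreconnectedSpace Y] [TopologicalSpace X] {f : Y → X} (hf : Continuous f) {A : Set X}
    {a b : Y} (ha : f a ∈ A) (hb : f b ∉ A) : ∃ y, f y ∈ frontier A := by
  obtain ⟨y, hy⟩ : (frontier (f ⁻¹' A)).Nonempty :=
    nonempty_frontier_iff.mpr ⟨⟨a, ha⟩, fun h => hb (h.symm ▸ mem_univ b :)⟩
  exact ⟨y, hf.frontier_preimage_subset A hy⟩

section Action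

variable {Y G X : Type*} [TopologicalSpace Y] [Group G] [TopologicalSpace G]
  [TopologicalSpace X] [MulAction G X] [ContinuousSMul G X]

/-- Following `x ∈ A \ g • A` along the orbit path `t ↦ φ t • x`, which runs from `x` to
`g⁻¹ • x ∉ A`, one must cross the frontier of `A`. -/
theorem diff_smul_set_subset_image_frontier [PreconnectedSpace Y] {φ : Y → G}
    (hφ : Continuous φ) {a b : Y} {g : G} (ha : φ a = 1) (hb : φ b = g⁻¹) (A : Set X) :
    A \ g • A ⊆ (fun p : Y × X => (φ p.1)⁻¹ • p.2) '' (univ ×ˢ frontier A) := by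
  rintro x ⟨hxA, hxgA⟩
  obtain ⟨t, ht⟩ := (hφ.smul continuous_const).exists_mem_frontier_of_mem_of_notMem
    (f := fun t => φ t • x) (a := a) (b := b) (by simpa [ha] using hxA)
    (by simpa [hb, mem_smul_set_iff_inv_smul_mem] using hxgA)
  exact ⟨(t, φ t • x), ⟨mem_univ t, ht⟩, inv_smul_smul (φ t) x⟩

theorem isCompact_image_inv_smul [CompactSpace Y] [ContinuousInv G] {φ : Y → G}
    (hφ : Continuous φ) {K : Set X} (hK : IsCompact K) :
    IsCompact ((fun p : Y × X => (φ p.1)⁻¹ • p.2) '' (univ ×ˢ K)) :=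
  (isCompact_univ.prod hK).image ((hφ.comp continuous_fst).inv.smul continuous_snd)

end Action

theorem stmt1 {G X : Type*} [Group G] [TopologicalSpace G] [IsTopologicalGroup G]
    [TopologicalSpace X] [MulAction G X] [ContinuousSMul G X]
    (A : Set X) (g : G) (φ : Set.Icc (0:ℝ) 1 → G) (hφ : Continuous φ)
    (hφ0 : φ ⟨0, Set.left_mem_Icc.mpr (by norm_num)⟩ = 1)
    (hφ1 : φ ⟨1, Set.right_mem_Icc.mpr (by norm_num)⟩ = g⁻¹) :
    A \ (g • A) ⊆ (fun p : Set.Icc (0:ℝ) 1 × X => (φ p.1)⁻¹ • p.2) '' (Set.univ ×ˢ frontier A)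
      ∧ (IsCompact (frontier A) →
          ∃ K : Set X, IsCompact K ∧ A \ (g • A) ⊆ K) := by
  have hsub := diff_smul_set_subset_image_frontier hφ hφ0 hφ1 A
  exact ⟨hsub, fun hA => ⟨_, isCompact_image_inv_smul hφ hA, hsub⟩⟩
end

section
/- Let G be a locally compact second countable group acting continuously and transitively on a locally compact second countable Hausdorff space X, preserving a σ-finite Radon measure μ. Suppose B ⊆ X is a Borel set with μ(B) = ∞ and μ(X \ B) = ∞ such that μ(B △ g·B) < ∞ for every g ∈ G. Then for every g ∈ G the function c(g) := 1_B − 1_{g·B} lies in L²(X, μ), the map c satisfies the cocycle identity c(gh) = c(g) + g·c(h), and c is not a coboundary: there is no ξ ∈ L²(X, μ) such that c(g) = ξ − g·ξ in L²(X, μ) for every g ∈ G. In particular the first cohomology of G with coefficients in the Koopman representation on L²(X, μ) is nonzero. -/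
/-!
If `c(g) = ξ - g • ξ` with `ξ ∈ L²`, then `f := 1_B - ξ` is a.e. invariant under every `g`, hence
so is its level set `A = {Re f > 1/2}`. Since `A` differs from `B` only where `‖ξ‖ ≥ 1/2`, a set of
finite measure, both `A` and `Aᶜ` have infinite measure. This contradicts ergodicity of the action:
by Fubini against Haar measure, for a.e. point `x` of an a.e.-invariant set, Haar-a.e. `g • x` lies
in the set as well, and transitivity carries such a point of `A` onto such a point of `Aᶜ`.
-/

open MeasureTheory Set Pointwise Filter
open scoped symmDiff ENNReal

theorem Set.indicator_smul_set_apply {α β M : Type*} [Group α] [MulAction α β] [Zero M]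
    (a : α) (s : Set β) (c : M) (x : β) :
    (a • s).indicator (fun _ => c) x = s.indicator (fun _ => c) (a⁻¹ • x) := by
  rw [← preimage_smul_inv]
  rfl

theorem memLp_indicator_const_sub_indicator_const {α E : Type*} {m : MeasurableSpace α}
    {μ : Measure α} [NormedAddCommGroup E] {s t : Set α} (hs : MeasurableSet s)
    (ht : MeasurableSet t) (hst : μ (s ∆ t) ≠ ∞) (p : ℝ≥0∞) (c : E) :
    MemLp (fun x => s.indicator (fun _ => c) x - t.indicator (fun _ => c) x) p μ := by
  have hsplit : (fun x => s.indicator (fun _ => c) x - t.indicator (fun _ => c) x) =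
      fun x => (s \ t).indicator (fun _ => c) x - (t \ s).indicator (fun _ => c) x := by
    funext x
    by_cases hxs : x ∈ s <;> by_cases hxt : x ∈ t <;> simp [hxs, hxt]
  rw [symmDiff_def] at hst
  rw [hsplit]
  exact (memLp_indicator_const p (hs.diff ht) c
      (.inr (ne_top_of_le_ne_top hst (measure_mono subset_union_left)))).sub
    (memLp_indicator_const p (ht.diff hs) c
      (.inr (ne_top_of_le_ne_top hst (measure_mono subset_union_right))))

theorem ErgodicSMul.of_continuousSMul_of_isPretransitive {G X : Type*} [Group G]
    [TopologicalSpace G] [IsTopologicalGroup G] [LocallyCompactSpace G]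
    [SecondCountableTopology G] [TopologicalSpace X] [MeasurableSpace X] [BorelSpace X]
    [MulAction G X] [ContinuousSMul G X] [MulAction.IsPretransitive G X]
    (μ : Measure X) [SFinite μ] [SMulInvariantMeasure G X μ] : ErgodicSMul G X μ := by
  borelize G
  refine ⟨fun {s} hs hinv => ?_⟩
  let ν : Measure G := Measure.haar
  have hmeas : MeasurableSet {p : X × G | p.2 • p.1 ∈ s ↔ p.1 ∈ s} :=
    ((continuous_snd.smul continuous_fst).measurable hs).iff (measurable_fst hs)
  have hae : ∀ᵐ x ∂μ, ∀ᵐ g ∂ν, (g • x ∈ s ↔ x ∈ s) :=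
    (Measure.ae_ae_comm hmeas).2 <| ae_of_all _ fun g => (hinv g).mono fun x hx => Iff.of_eq hx
  rw [eventuallyConst_set]
  by_contra! hfreq
  obtain ⟨x₀, hx₀, hx₀s⟩ := (hae.and_frequently hfreq.2).exists
  obtain ⟨x₁, hx₁, hx₁s⟩ := (hae.and_frequently hfreq.1).exists
  obtain ⟨h, rfl⟩ := MulAction.exists_smul_eq G x₀ x₁
  have h₀ : ∀ᵐ g ∂ν, (g * h) • x₀ ∈ s :=
    (quasiMeasurePreserving_mul_right ν h).ae (p := (· • x₀ ∈ s)) (hx₀.mono fun g hg => hg.2 hx₀s)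
  have h₁ : ∀ᵐ g ∂ν, (g * h) • x₀ ∉ s :=
    hx₁.mono fun g hg => by rw [mul_smul]; exact fun hmem => hx₁s (hg.1 hmem)
  obtain ⟨g, hg₀, hg₁⟩ := (h₀.and h₁).exists
  exact hg₁ hg₀

theorem setOf_half_lt_re_indicator_sub_symmDiff_subset {X : Type*} (s : Set X) (ξ : X → ℂ) :
    {x | 1 / 2 < (s.indicator (fun _ => (1 : ℂ)) x - ξ x).re} ∆ s ⊆ {x | 1 / 2 ≤ ‖ξ x‖} := by
  intro x hx
  refine le_trans ?_ (Complex.abs_re_le_norm (ξ x))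
  rcases hx with ⟨hlt, hxs⟩ | ⟨hxs, hle⟩
  · simp only [mem_ofPred_eq, indicator_of_notMem hxs, zero_sub, Complex.neg_re] at hlt
    exact le_abs.2 (.inr (by linarith))
  · simp only [mem_ofPred_eq, indicator_of_mem hxs, Complex.sub_re, Complex.one_re, not_lt] at hle
    exact le_abs.2 (.inl (by linarith))

theorem not_exists_memLp_indicator_sub_ae_eq_coboundary {G X : Type*} [Group G] [MulAction G X]
    [MeasurableSpace X] {μ : Measure X} [ErgodicSMul G X μ] {s : Set X}
    (hs : MeasurableSet s) (hs_top : μ s = ∞) (hsc_top : μ sᶜ = ∞) {p : ℝ≥0∞} (hp0 : p ≠ 0)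
    (hp : p ≠ ∞) :
    ¬ ∃ ξ : X → ℂ, MemLp ξ p μ ∧ ∀ g : G,
        (fun x => s.indicator (fun _ => (1 : ℂ)) x - (g • s).indicator (fun _ => (1 : ℂ)) x)
          =ᵐ[μ] fun x => ξ x - ξ (g⁻¹ • x) := by
  rintro ⟨ξ, hξ, hcob⟩
  set f : X → ℂ := fun x => s.indicator (fun _ => 1) x - ξ x
  set A : Set X := {x | 1 / 2 < (f x).re}
  have hf_inv : ∀ g : G, (fun x => f (g⁻¹ • x)) =ᵐ[μ] f := fun g =>
    (hcob g).mono fun x hx => by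
      simp only [indicator_smul_set_apply] at hx
      linear_combination -hx
  have hA_inv : ∀ g : G, g • A =ᵐ[μ] A := fun g => by
    rw [← preimage_smul_inv]
    exact (hf_inv g).preimage {z | 1 / 2 < z.re}
  have hA_meas : NullMeasurableSet A μ :=
    (((measurable_const.indicator hs).aemeasurable.sub hξ.aestronglyMeasurable.aemeasurable).re)
      |>.nullMeasurable (measurableSet_lt measurable_const measurable_id)
  have hAs : μ (A ∆ s) ≠ ∞ := ne_top_of_le_ne_top
    (hξ.meas_ge_lt_top hp0 hp (ε := 1 / 2) (by norm_num)).ne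
    (measure_mono (setOf_half_lt_re_indicator_sub_symmDiff_subset s ξ))
  rcases eventuallyConst_set'.1 (aeconst_of_forall_smul_ae_eq G hA_meas hA_inv) with h | h
  · have := (measure_eq_top_iff_of_symmDiff hAs).2 hs_top
    simp [measure_congr h] at this
  · rw [← compl_symmDiff_compl] at hAs
    have := (measure_eq_top_iff_of_symmDiff hAs).2 hsc_top
    simp [ae_eq_univ.1 h] at this

theorem stmt2_general {G X : Type*} [Group G] [TopologicalSpace G] [IsTopologicalGroup G]
    [LocallyCompactSpace G] [SecondCountableTopology G]
    [TopologicalSpace X] [MeasurableSpace X] [BorelSpace X]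
    [MulAction G X] [ContinuousSMul G X] [MulAction.IsPretransitive G X]
    (μ : Measure X) [SigmaFinite μ] [SMulInvariantMeasure G X μ]
    (B : Set X) (hB : MeasurableSet B) (hBinf : μ B = ⊤) (hBcinf : μ Bᶜ = ⊤)
    (hsym : ∀ g : G, μ (symmDiff B (g • B)) < ⊤) :
    (∀ g : G, MemLp
        (fun x => B.indicator (fun _ => (1:ℂ)) x - (g • B).indicator (fun _ => (1:ℂ)) x) 2 μ)
    ∧ (∀ g h : G, ∀ x : X,
        B.indicator (fun _ => (1:ℂ)) x - ((g * h) • B).indicator (fun _ => (1:ℂ)) x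
          = (B.indicator (fun _ => (1:ℂ)) x - (g • B).indicator (fun _ => (1:ℂ)) x)
            + (B.indicator (fun _ => (1:ℂ)) (g⁻¹ • x)
                - (h • B).indicator (fun _ => (1:ℂ)) (g⁻¹ • x)))
    ∧ ¬ ∃ ξ : X → ℂ, MemLp ξ 2 μ ∧ ∀ g : G,
        (fun x => B.indicator (fun _ => (1:ℂ)) x - (g • B).indicator (fun _ => (1:ℂ)) x)
          =ᵐ[μ] fun x => ξ x - ξ (g⁻¹ • x) := by
  have : ErgodicSMul G X μ := .of_continuousSMul_of_isPretransitive μ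
  refine ⟨fun g => memLp_indicator_const_sub_indicator_const hB (hB.const_smul g) (hsym g).ne 2 1,
    fun g h x => ?_,
    not_exists_memLp_indicator_sub_ae_eq_coboundary hB hBinf hBcinf two_ne_zero ENNReal.ofNat_ne_top⟩
  simp only [Set.indicator_smul_set_apply, mul_smul]
  ring

theorem stmt2 {G X : Type*} [Group G] [TopologicalSpace G] [IsTopologicalGroup G]
    [LocallyCompactSpace G] [SecondCountableTopology G]
    [TopologicalSpace X] [T2Space X] [LocallyCompactSpace X] [SecondCountableTopology X]
    [MeasurableSpace X] [BorelSpace X]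
    [MulAction G X] [ContinuousSMul G X] [MulAction.IsPretransitive G X]
    (μ : Measure X) [SigmaFinite μ] [μ.Regular] [SMulInvariantMeasure G X μ]
    (B : Set X) (hB : MeasurableSet B) (hBinf : μ B = ⊤) (hBcinf : μ Bᶜ = ⊤)
    (hsym : ∀ g : G, μ (symmDiff B (g • B)) < ⊤) :
    (∀ g : G, MemLp
        (fun x => B.indicator (fun _ => (1:ℂ)) x - (g • B).indicator (fun _ => (1:ℂ)) x) 2 μ)
    ∧ (∀ g h : G, ∀ x : X,
        B.indicator (fun _ => (1:ℂ)) x - ((g * h) • B).indicator (fun _ => (1:ℂ)) x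
          = (B.indicator (fun _ => (1:ℂ)) x - (g • B).indicator (fun _ => (1:ℂ)) x)
            + (B.indicator (fun _ => (1:ℂ)) (g⁻¹ • x)
                - (h • B).indicator (fun _ => (1:ℂ)) (g⁻¹ • x)))
    ∧ ¬ ∃ ξ : X → ℂ, MemLp ξ 2 μ ∧ ∀ g : G,
        (fun x => B.indicator (fun _ => (1:ℂ)) x - (g • B).indicator (fun _ => (1:ℂ)) x)
          =ᵐ[μ] fun x => ξ x - ξ (g⁻¹ • x) :=
  stmt2_general μ B hB hBinf hBcinf hsym
end

section
/- Let G be a topological group and π a strongly continuous unitary representation of G on a complex Hilbert space H. Assume G is generated (as a group) by a sequence of subgroups (G_n)_{n∈ℕ} such that for every n ∈ ℕ: (a) every element of G_n commutes with every element of G_{n+1}; (b) the restriction π|_{G_n} has no nonzero invariant vectors; and (c) there exists an index i and a compact subset Q ⊆ G_i and a constant C > 0 such that ‖ξ‖ ≤ C · sup_{g∈Q} ‖π(g)ξ − ξ‖ for every ξ ∈ H. Then every continuous 1-cocycle c : G → H for π is a 1-coboundary, i.e., H¹(G, π) = 0. -/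
/-!
A cocycle `c` is a coboundary on a subgroup exactly when the affine isometric action
`x ↦ π g x + c g` of that subgroup has a fixed point, and a bounded orbit provides one: its
Chebyshev center, unique by the parallelogram law. For `q ∈ G_i` and `h ∈ G_{i+1}`, commutativity
gives `c h - π q (c h) = c q - π h (c q)`, so the spectral gap bounds `c` on `G_{i+1}` by
`2C sup_Q ‖c‖`; hence `c = ξ - π(·)ξ` on `G_{i+1}`. If `c - (ξ - π(·)ξ)` vanishes on `G_n`, its
values on `G_{n±1}` are `G_n`-invariant, hence zero; so it vanishes on every `G_n`, thus on `G`.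
-/

open Set Metric Filter Topology

section ChebyshevRadius

variable {α : Type*} [PseudoMetricSpace α] {S : Set α}

/-- Equals `0` (junk value of `sInf`) when `S` is empty or unbounded. -/
noncomputable def chebyshevRadius (S : Set α) : ℝ :=
  sInf {R | ∃ x, S ⊆ closedBall x R}

lemma chebyshevRadius_nonneg (hne : S.Nonempty) : 0 ≤ chebyshevRadius S := by
  obtain ⟨z, hz⟩ := hne
  refine Real.sInf_nonneg ?_
  rintro R ⟨x, hx⟩
  exact dist_nonneg.trans (hx hz)

lemma chebyshevRadius_le (hne : S.Nonempty) {x : α} {R : ℝ} (h : S ⊆ closedBall x R) :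
    chebyshevRadius S ≤ R := by
  obtain ⟨z, hz⟩ := hne
  refine csInf_le ⟨0, ?_⟩ ⟨x, h⟩
  rintro R' ⟨y, hy⟩
  exact dist_nonneg.trans (hy hz)

lemma exists_subset_closedBall_of_chebyshevRadius_lt (hS : Bornology.IsBounded S)
    (hne : S.Nonempty) {R : ℝ} (hR : chebyshevRadius S < R) : ∃ x, S ⊆ closedBall x R := by
  obtain ⟨R₀, h₀⟩ := hS.subset_closedBall hne.some
  obtain ⟨R', ⟨x, hx⟩, hR'⟩ :=
    exists_lt_of_csInf_lt (s := {R | ∃ x, S ⊆ closedBall x R}) ⟨R₀, _, h₀⟩ hR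
  exact ⟨x, hx.trans (closedBall_subset_closedBall hR'.le)⟩

end ChebyshevRadius

section ChebyshevCenter

variable {E : Type*} [NormedAddCommGroup E] [InnerProductSpace ℝ E] {S : Set E}

lemma sq_dist_le_of_subset_closedBall (hne : S.Nonempty) {x y : E} {R : ℝ}
    (hx : S ⊆ closedBall x R) (hy : S ⊆ closedBall y R) :
    dist x y ^ 2 ≤ 4 * (R ^ 2 - chebyshevRadius S ^ 2) := by
  have hmid : ∀ z ∈ S, dist z (midpoint ℝ x y) ^ 2 ≤ R ^ 2 - (dist x y / 2) ^ 2 := by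
    intro z hz
    have h_apollonius :=
      EuclideanGeometry.dist_sq_add_dist_sq_eq_two_mul_dist_midpoint_sq_add_half_dist_sq z x y
    have hzx : dist z x ≤ R := hx hz
    have hzy : dist z y ≤ R := hy hz
    nlinarith [dist_nonneg (x := z) (y := x), dist_nonneg (x := z) (y := y)]
  obtain ⟨z, hz⟩ := hne
  have ha : 0 ≤ R ^ 2 - (dist x y / 2) ^ 2 := (sq_nonneg _).trans (hmid z hz)
  have hr : chebyshevRadius S ≤ √(R ^ 2 - (dist x y / 2) ^ 2) :=
    chebyshevRadius_le ⟨z, hz⟩ fun w hw => Real.le_sqrt_of_sq_le (hmid w hw)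
  have := (Real.le_sqrt (chebyshevRadius_nonneg ⟨z, hz⟩) ha).1 hr
  linarith

lemma exists_subset_closedBall_chebyshevRadius [CompleteSpace E] (hS : Bornology.IsBounded S)
    (hne : S.Nonempty) : ∃ x, S ⊆ closedBall x (chebyshevRadius S) := by
  set r := chebyshevRadius S
  choose x hx using fun n : ℕ => exists_subset_closedBall_of_chebyshevRadius_lt hS hne
    (lt_add_of_pos_right r (Nat.one_div_pos_of_nat (n := n)))
  set b : ℝ → ℝ := fun t => √(4 * ((r + t) ^ 2 - r ^ 2))
  have hb : Tendsto (fun N : ℕ => b (1 / (N + 1))) atTop (𝓝 0) := by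
    have : Continuous b := by fun_prop
    simpa only [b, Function.comp_def, add_zero, sub_self, mul_zero, Real.sqrt_zero] using
      (this.tendsto 0).comp tendsto_one_div_add_atTop_nhds_zero_nat
  have hcauchy : CauchySeq x := by
    refine cauchySeq_of_le_tendsto_0 _ (fun n m N hn hm => ?_) hb
    have mono : ∀ {k}, N ≤ k → S ⊆ closedBall (x k) (r + 1 / (N + 1)) := fun hk =>
      (hx _).trans (closedBall_subset_closedBall (by gcongr))
    exact Real.le_sqrt_of_sq_le (sq_dist_le_of_subset_closedBall hne (mono hn) (mono hm))
  obtain ⟨x₀, hx₀⟩ := cauchySeq_tendsto_of_complete hcauchy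
  refine ⟨x₀, fun z hz => ?_⟩
  have hlim : Tendsto (fun n : ℕ => r + 1 / ((n : ℝ) + 1)) atTop (𝓝 r) := by
    simpa using tendsto_one_div_add_atTop_nhds_zero_nat.const_add r
  exact le_of_tendsto_of_tendsto' (tendsto_const_nhds.dist hx₀) hlim fun n => hx n hz

lemma exists_forall_isFixedPt_of_isometry [CompleteSpace E] (hS : Bornology.IsBounded S)
    (hne : S.Nonempty) :
    ∃ x, ∀ f : E → E, Isometry f → S ⊆ f '' S → Function.IsFixedPt f x := by
  obtain ⟨x, hx⟩ := exists_subset_closedBall_chebyshevRadius hS hne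
  refine ⟨x, fun f hf hfS => ?_⟩
  have hfx : S ⊆ closedBall (f x) (chebyshevRadius S) := by
    rintro _ hz
    obtain ⟨z, hz', rfl⟩ := hfS hz
    rw [mem_closedBall, hf.dist_eq]
    exact hx hz'
  have := sq_dist_le_of_subset_closedBall hne hfx hx
  rw [sub_self, mul_zero] at this
  exact dist_le_zero.1 (by nlinarith [dist_nonneg (x := f x) (y := x)])

end ChebyshevCenter

section Cocycle

variable {G H : Type*} [Group G] [NormedAddCommGroup H] [Module ℂ H]

def IsCocycle (π : G →* (H ≃ₗᵢ[ℂ] H)) (c : G → H) : Prop :=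
  ∀ g h, c (g * h) = c g + π g (c h)

namespace IsCocycle

variable {π : G →* (H ≃ₗᵢ[ℂ] H)} {c : G → H}

lemma map_one_eq_zero (hc : IsCocycle π c) : c 1 = 0 := by
  have h := hc 1 1
  rw [one_mul, map_one, LinearIsometryEquiv.coe_one, id] at h
  exact left_eq_add.1 h

lemma sub_coboundary (hc : IsCocycle π c) (ξ : H) :
    IsCocycle π fun g => c g - (ξ - π g ξ) := by
  intro g h
  dsimp only
  rw [hc g h, map_mul, LinearIsometryEquiv.coe_mul, Function.comp_apply, map_sub, map_sub]
  abel

lemma sub_map_eq_of_commute (hc : IsCocycle π c) {g h : G} (hgh : Commute g h) :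
    c g - π h (c g) = c h - π g (c h) := by
  rw [sub_eq_sub_iff_add_eq_add, ← hc, ← hc, hgh.eq]

lemma eq_zero_of_forall_commute (hc : IsCocycle π c) {A B : Set G}
    (hAB : ∀ a ∈ A, ∀ b ∈ B, Commute a b) (hcA : ∀ a ∈ A, c a = 0)
    (hA : ∀ ξ : H, (∀ a ∈ A, π a ξ = ξ) → ξ = 0) {b : G} (hb : b ∈ B) : c b = 0 :=
  hA _ fun a ha => by
    have h := hc.sub_map_eq_of_commute (hAB a ha b hb)
    rw [hcA a ha, map_zero, sub_self, eq_comm, sub_eq_zero] at h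
    exact h.symm

lemma isBounded_image_of_forall_commute (hc : IsCocycle π c) {Q B : Set G}
    (hQB : ∀ q ∈ Q, ∀ b ∈ B, Commute q b) (hQ : Bornology.IsBounded (c '' Q)) {C : ℝ}
    (hC : 0 ≤ C) (hgap : ∀ ξ : H, ‖ξ‖ ≤ C * ⨆ q : Q, ‖π q ξ - ξ‖) :
    Bornology.IsBounded (c '' B) := by
  obtain ⟨M, hM, hcM⟩ := hQ.exists_pos_norm_le
  refine isBounded_iff_forall_norm_le.2 ⟨C * (2 * M), ?_⟩
  rintro _ ⟨b, hb, rfl⟩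
  refine (hgap _).trans <|
    mul_le_mul_of_nonneg_left (Real.iSup_le (fun ⟨q, hq⟩ => ?_) (by positivity)) hC
  have hcq : ‖c q‖ ≤ M := hcM _ (mem_image_of_mem c hq)
  calc ‖π q (c b) - c b‖ = ‖π b (c q) - c q‖ := by
        rw [norm_sub_rev, ← hc.sub_map_eq_of_commute (hQB q hq b hb), norm_sub_rev]
    _ ≤ ‖π b (c q)‖ + ‖c q‖ := norm_sub_le _ _
    _ ≤ 2 * M := by rw [LinearIsometryEquiv.norm_map]; linarith

lemma eq_zero_of_iSup_eq_top (hc : IsCocycle π c) {ι : Sort*} {K : ι → Subgroup G}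
    (hK : ⨆ i, K i = ⊤) (hcK : ∀ i, ∀ g ∈ K i, c g = 0) (g : G) : c g = 0 :=
  Subgroup.iSup_induction K (C := fun g => c g = 0) (hK ▸ Subgroup.mem_top g) hcK
    hc.map_one_eq_zero fun x y hx hy => by rw [hc x y, hx, hy, map_zero, add_zero]

end IsCocycle

end Cocycle

theorem IsCocycle.exists_eq_sub_of_isBounded_image {G H : Type*} [Group G] [NormedAddCommGroup H]
    [InnerProductSpace ℂ H] [CompleteSpace H] {π : G →* (H ≃ₗᵢ[ℂ] H)} {c : G → H}
    (hc : IsCocycle π c) (Γ : Subgroup G) (hb : Bornology.IsBounded (c '' Γ)) :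
    ∃ ξ : H, ∀ h ∈ Γ, c h = ξ - π h ξ := by
  let : InnerProductSpace ℝ H := InnerProductSpace.complexToReal
  obtain ⟨ξ, hξ⟩ := exists_forall_isFixedPt_of_isometry hb ⟨c 1, 1, Γ.one_mem, rfl⟩
  refine ⟨ξ, fun h hh => ?_⟩
  have hfix : π h ξ + c h = ξ := by
    refine hξ (fun x => π h x + c h) ((isometry_add_right (c h)).comp (π h).isometry) ?_
    rintro _ ⟨g, hg, rfl⟩
    refine ⟨c (h⁻¹ * g), mem_image_of_mem c (Γ.mul_mem (Γ.inv_mem hh) hg), ?_⟩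
    dsimp only
    rw [add_comm, ← hc, mul_inv_cancel_left]
  exact eq_sub_of_add_eq' hfix

theorem stmt3_general {G H : Type*} [Group G] [TopologicalSpace G]
    [NormedAddCommGroup H] [InnerProductSpace ℂ H] [CompleteSpace H]
    (π : G →* (H ≃ₗᵢ[ℂ] H))
    (G_ : ℕ → Subgroup G) (hgen : (⨆ n, G_ n) = ⊤)
    (hcomm : ∀ n : ℕ, ∀ g ∈ G_ n, ∀ h ∈ G_ (n + 1), Commute g h)
    (hnoinv : ∀ n : ℕ, ∀ ξ : H, (∀ g ∈ G_ n, π g ξ = ξ) → ξ = 0)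
    (hgap : ∃ i : ℕ, ∃ Q : Set G, Q ⊆ (G_ i : Set G) ∧ IsCompact Q ∧
      ∃ C : ℝ, 0 < C ∧ ∀ ξ : H, ‖ξ‖ ≤ C * ⨆ g : Q, ‖π (g : G) ξ - ξ‖) :
    ∀ c : G → H, Continuous c → (∀ g h : G, c (g * h) = c g + π g (c h)) →
      ∃ ξ : H, ∀ g : G, c g = ξ - π g ξ := by
  intro c hc_cont hc
  obtain ⟨i, Q, hQ, hQ_compact, C, hC, hgap⟩ := hgap
  have hbdd : Bornology.IsBounded (c '' G_ (i + 1)) :=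
    IsCocycle.isBounded_image_of_forall_commute hc (fun q hq => hcomm i q (hQ hq))
      (hQ_compact.image hc_cont).isBounded hC.le hgap
  obtain ⟨ξ, hξ⟩ := IsCocycle.exists_eq_sub_of_isBounded_image hc _ hbdd
  have hc' := IsCocycle.sub_coboundary hc ξ
  let P n := ∀ g ∈ G_ n, c g - (ξ - π g ξ) = 0
  have hP_succ : ∀ n, P n ↔ P (n + 1) := fun n =>
    ⟨fun h _ => hc'.eq_zero_of_forall_commute (hcomm n) h (hnoinv n),
      fun h _ => hc'.eq_zero_of_forall_commute (fun a ha b hb => (hcomm n b hb a ha).symm) h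
        (hnoinv (n + 1))⟩
  have hP_zero : ∀ n, P n ↔ P 0 := fun n =>
    Nat.rec Iff.rfl (fun n ih => (hP_succ n).symm.trans ih) n
  have hP : ∀ n, P n := fun n =>
    (hP_zero n).2 <| (hP_zero (i + 1)).1 fun g hg => sub_eq_zero.2 (hξ g hg)
  exact ⟨ξ, fun g => sub_eq_zero.1 (hc'.eq_zero_of_iSup_eq_top hgen hP g)⟩

theorem stmt3 {G H : Type*} [Group G] [TopologicalSpace G] [IsTopologicalGroup G]
    [NormedAddCommGroup H] [InnerProductSpace ℂ H] [CompleteSpace H]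
    (π : G →* (H ≃ₗᵢ[ℂ] H)) (hπcont : ∀ ξ : H, Continuous fun g => π g ξ)
    (G_ : ℕ → Subgroup G) (hgen : (⨆ n, G_ n) = ⊤)
    (hcomm : ∀ n : ℕ, ∀ g ∈ G_ n, ∀ h ∈ G_ (n + 1), Commute g h)
    (hnoinv : ∀ n : ℕ, ∀ ξ : H, (∀ g ∈ G_ n, π g ξ = ξ) → ξ = 0)
    (hgap : ∃ i : ℕ, ∃ Q : Set G, Q ⊆ (G_ i : Set G) ∧ IsCompact Q ∧
      ∃ C : ℝ, 0 < C ∧ ∀ ξ : H, ‖ξ‖ ≤ C * ⨆ g : Q, ‖π (g : G) ξ - ξ‖) :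
    ∀ c : G → H, Continuous c → (∀ g h : G, c (g * h) = c g + π g (c h)) →
      ∃ ξ : H, ∀ g : G, c g = ξ - π g ξ :=
  stmt3_general π G_ hgen hcomm hnoinv hgap
end

section
/- Let G be a topological group, π a strongly continuous unitary representation of G on a complex Hilbert space H, and c : G → H a continuous 1-cocycle for π. Suppose Q ⊆ G is a compact subset and C > 0 is a constant such that ‖ξ‖ ≤ C · sup_{g∈Q} ‖π(g)ξ − ξ‖ for every ξ ∈ H. Then for every h ∈ G that commutes with every element of Q, one has ‖c(h)‖ ≤ 2C · sup_{g∈Q} ‖c(g)‖; in particular c is bounded on the centralizer of Q in G. -/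
open Set

theorem Commute.cocycle_sub_eq {G H : Type*} [Mul G] [AddCommGroup H] {ρ : G → H → H}
    {c : G → H} (hc : ∀ g h, c (g * h) = c g + ρ g (c h)) {g h : G} (hgh : Commute g h) :
    ρ g (c h) - c h = ρ h (c g) - c g := by
  have h_swap : c g + ρ g (c h) = c h + ρ h (c g) := by rw [← hc, ← hc, hgh.eq]
  rw [sub_eq_sub_iff_add_eq_add, add_comm, h_swap, add_comm]

theorem Commute.norm_cocycle_sub_le {G H : Type*} [Mul G] [SeminormedAddCommGroup H]
    {ρ : G → H → H} (hρ : ∀ g x, ‖ρ g x‖ = ‖x‖) {c : G → H}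
    (hc : ∀ g h, c (g * h) = c g + ρ g (c h)) {g h : G} (hgh : Commute g h) :
    ‖ρ g (c h) - c h‖ ≤ 2 * ‖c g‖ := by
  rw [hgh.cocycle_sub_eq hc]
  calc ‖ρ h (c g) - c g‖ ≤ ‖ρ h (c g)‖ + ‖c g‖ := norm_sub_le _ _
    _ = 2 * ‖c g‖ := by rw [hρ]; ring

theorem stmt4_general {G H : Type*} [Group G] [TopologicalSpace G]
    [NormedAddCommGroup H] [InnerProductSpace ℂ H]
    (π : G →* (H ≃ₗᵢ[ℂ] H))
    (c : G → H) (hccont : Continuous c)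
    (hcocycle : ∀ g h : G, c (g * h) = c g + π g (c h))
    (Q : Set G) (hQ : IsCompact Q) (C : ℝ) (hC : 0 < C)
    (hgap : ∀ ξ : H, ‖ξ‖ ≤ C * ⨆ g : Q, ‖π (g : G) ξ - ξ‖) :
    ∀ h : G, (∀ g ∈ Q, Commute g h) → ‖c h‖ ≤ 2 * C * ⨆ g : Q, ‖c (g : G)‖ := by
  intro h hcomm
  have hbdd : BddAbove (range fun g : Q => ‖c g‖) := by
    simpa only [image_eq_range] using hQ.bddAbove_image hccont.norm.continuousOn
  have hρ : ∀ g x, ‖π g x‖ = ‖x‖ := fun g => (π g).norm_map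
  have h_orbit : ∀ g : Q, ‖π g (c h) - c h‖ ≤ 2 * ⨆ g : Q, ‖c g‖ := fun g =>
    ((hcomm g g.2).norm_cocycle_sub_le hρ hcocycle).trans
      (mul_le_mul_of_nonneg_left (le_ciSup hbdd g) zero_le_two)
  calc ‖c h‖ ≤ C * ⨆ g : Q, ‖π g (c h) - c h‖ := hgap _
    _ ≤ C * (2 * ⨆ g : Q, ‖c g‖) :=
        mul_le_mul_of_nonneg_left
          (Real.iSup_le h_orbit (mul_nonneg zero_le_two (Real.iSup_nonneg fun _ => norm_nonneg _)))
          hC.le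
    _ = 2 * C * ⨆ g : Q, ‖c g‖ := by ring

theorem stmt4 {G H : Type*} [Group G] [TopologicalSpace G] [IsTopologicalGroup G]
    [NormedAddCommGroup H] [InnerProductSpace ℂ H] [CompleteSpace H]
    (π : G →* (H ≃ₗᵢ[ℂ] H)) (hπcont : ∀ ξ : H, Continuous fun g => π g ξ)
    (c : G → H) (hccont : Continuous c)
    (hcocycle : ∀ g h : G, c (g * h) = c g + π g (c h))
    (Q : Set G) (hQ : IsCompact Q) (C : ℝ) (hC : 0 < C)
    (hgap : ∀ ξ : H, ‖ξ‖ ≤ C * ⨆ g : Q, ‖π (g : G) ξ - ξ‖) :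
    ∀ h : G, (∀ g ∈ Q, Commute g h) → ‖c h‖ ≤ 2 * C * ⨆ g : Q, ‖c (g : G)‖ :=
  stmt4_general π c hccont hcocycle Q hQ C hC hgap
end

section
/- Let G be a topological group, π a unitary representation of G on a complex Hilbert space H, and c : G → H a 1-cocycle for π. Suppose H₀ and K are subgroups of G such that every element of H₀ commutes with every element of K, c vanishes identically on H₀, and π restricted to H₀ has no nonzero invariant vectors. Then c vanishes identically on K. -/
open MeasureTheory Set

theorem apply_cocycle_eq_of_commute {G H F : Type*} [Mul G] [AddZeroClass H] [FunLike F H H]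
    [ZeroHomClass F H H] (π : G → F) {c : G → H} (hc : ∀ g h : G, c (g * h) = c g + π g (c h))
    {h k : G} (hch : c h = 0) (hhk : Commute h k) : π h (c k) = c k :=
  calc π h (c k) = c (h * k) := by rw [hc, hch, zero_add]
    _ = c (k * h) := by rw [hhk.eq]
    _ = c k := by rw [hc, hch, map_zero, add_zero]

theorem stmt5_general {G H : Type*} [Group G]
    [NormedAddCommGroup H] [InnerProductSpace ℂ H]
    (π : G →* (H ≃ₗᵢ[ℂ] H))
    (c : G → H) (hcocycle : ∀ g h : G, c (g * h) = c g + π g (c h))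
    (H₀ K : Subgroup G)
    (hcomm : ∀ h ∈ H₀, ∀ k ∈ K, Commute h k)
    (hvanish : ∀ h ∈ H₀, c h = 0)
    (hnoinv : ∀ ξ : H, (∀ h ∈ H₀, π h ξ = ξ) → ξ = 0) :
    ∀ k ∈ K, c k = 0 := fun k hk =>
  hnoinv (c k) fun h hh =>
    apply_cocycle_eq_of_commute π hcocycle (hvanish h hh) (hcomm h hh k hk)

theorem stmt5 {G H : Type*} [Group G]
    [NormedAddCommGroup H] [InnerProductSpace ℂ H] [CompleteSpace H]
    (π : G →* (H ≃ₗᵢ[ℂ] H))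
    (c : G → H) (hcocycle : ∀ g h : G, c (g * h) = c g + π g (c h))
    (H₀ K : Subgroup G)
    (hcomm : ∀ h ∈ H₀, ∀ k ∈ K, Commute h k)
    (hvanish : ∀ h ∈ H₀, c h = 0)
    (hnoinv : ∀ ξ : H, (∀ h ∈ H₀, π h ξ = ξ) → ξ = 0) :
    ∀ k ∈ K, c k = 0 :=
  stmt5_general π c hcocycle H₀ K hcomm hvanish hnoinv
end

section
/- Let G be a unimodular locally compact second countable group and Γ ≤ G a discrete subgroup, with μ the G-invariant quotient measure on G/Γ. Assume G is generated (as a group) by a sequence of subgroups (G_n)_{n∈ℕ} such that for every n ∈ ℕ: (a) every element of G_n commutes with every element of G_{n+1}; (b) L²(G/Γ, μ) has no nonzero vector fixed by the Koopman action of every element of G_n; and (c) there exists an index i, a compact subset Q ⊆ G_i, and a constant C > 0 such that ‖f‖₂ ≤ C · sup_{g∈Q} ‖g·f − f‖₂ for every f ∈ L²(G/Γ, μ). Then every continuous 1-cocycle c : G → L²(G/Γ, μ) for the Koopman representation is a 1-coboundary, i.e., H¹(G, κ) = 0. -/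
/-!
For `a ∈ Q` and `b ∈ G_(i+1)`, the cocycle identity applied to `ab = ba` gives
`a • c b - c b = b • c a - c a`, of norm at most `2 sup_Q ‖c‖`; the spectral gap then bounds
`c` on `G_(i+1)`. A bounded orbit of the affine isometric action `ξ ↦ b • ξ + c b` has a fixed
point, its Chebyshev centre (unique by the parallelogram law), so `c` is a coboundary on
`G_(i+1)`. After subtracting that coboundary the cocycle vanishes on `G_(i+1)`. If a cocycle
vanishes on `H` and `g` commutes with `H`, then `c g` is `H`-invariant, hence zero; so the
vanishing propagates along the chain in both directions and to the group generated.
-/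

open MeasureTheory Set Filter Topology

section FarthestDist

variable {E : Type*} [NormedAddCommGroup E] {S : Set E} {x y : E}

/-- `⨆ s ∈ S, ‖x - s‖`, with the junk value `0` when `S` is empty or unbounded. -/
noncomputable def farthestDist (S : Set E) (x : E) : ℝ := sSup ((‖x - ·‖) '' S)

theorem farthestDist_nonneg : 0 ≤ farthestDist S x :=
  Real.sSup_nonneg <| forall_mem_image.2 fun _ _ => norm_nonneg _

theorem norm_sub_le_farthestDist (hS : Bornology.IsBounded S) {s : E} (hs : s ∈ S) :
    ‖x - s‖ ≤ farthestDist S x := by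
  obtain ⟨M, hM⟩ := isBounded_iff_forall_norm_le.1 hS
  refine le_csSup ⟨‖x‖ + M, forall_mem_image.2 fun t ht => ?_⟩ (mem_image_of_mem _ hs)
  exact (norm_sub_le x t).trans (by linarith [hM t ht])

theorem farthestDist_le (hne : S.Nonempty) {b : ℝ} (h : ∀ s ∈ S, ‖x - s‖ ≤ b) :
    farthestDist S x ≤ b :=
  csSup_le (hne.image _) (forall_mem_image.2 h)

theorem lipschitzWith_farthestDist (hne : S.Nonempty) (hS : Bornology.IsBounded S) :
    LipschitzWith 1 (farthestDist S) :=
  LipschitzWith.of_le_add fun x y => farthestDist_le hne fun s hs => by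
    calc ‖x - s‖ ≤ ‖x - y‖ + ‖y - s‖ := norm_sub_le_norm_sub_add_norm_sub x y s
      _ ≤ farthestDist S y + dist x y := by
        rw [dist_eq_norm, add_comm]
        gcongr
        exact norm_sub_le_farthestDist hS hs

theorem farthestDist_apply_of_isometry {T : E → E} (hT : Isometry T) (hTS : T '' S = S) (x : E) :
    farthestDist S (T x) = farthestDist S x := by
  conv_lhs => rw [farthestDist, ← hTS, image_image]
  simp only [← dist_eq_norm, hT.dist_eq, farthestDist]

end FarthestDist

section ChebyshevCenter

variable {E : Type*} [NormedAddCommGroup E] [InnerProductSpace ℝ E] {S : Set E}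

theorem sq_norm_sub_add_four_mul_sq_farthestDist_midpoint_le (hne : S.Nonempty)
    (hS : Bornology.IsBounded S) (x y : E) :
    ‖x - y‖ ^ 2 + 4 * farthestDist S (midpoint ℝ x y) ^ 2 ≤
      2 * farthestDist S x ^ 2 + 2 * farthestDist S y ^ 2 := by
  set B := (2 * farthestDist S x ^ 2 + 2 * farthestDist S y ^ 2 - ‖x - y‖ ^ 2) / 4
  have hmid : ∀ s ∈ S, ‖midpoint ℝ x y - s‖ ^ 2 ≤ B := fun s hs => by
    have hpar := parallelogram_law_with_norm ℝ (x - s) (y - s)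
    have hsum : x - s + (y - s) = (2 : ℝ) • (midpoint ℝ x y - s) := by
      rw [midpoint_eq_smul_add ℝ, invOf_eq_inv]; module
    rw [hsum, norm_smul, Real.norm_two, sub_sub_sub_cancel_right] at hpar
    have hxs := pow_le_pow_left₀ (norm_nonneg _) (norm_sub_le_farthestDist hS (x := x) hs) 2
    have hys := pow_le_pow_left₀ (norm_nonneg _) (norm_sub_le_farthestDist hS (x := y) hs) 2
    simp only [B]
    linarith
  have hB : 0 ≤ B := hne.elim fun s hs => (sq_nonneg _).trans (hmid s hs)
  have hle : farthestDist S (midpoint ℝ x y) ≤ √B := farthestDist_le hne fun s hs =>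
    (abs_norm _).symm.le.trans (Real.abs_le_sqrt (hmid s hs))
  have hsq := pow_le_pow_left₀ farthestDist_nonneg hle 2
  rw [Real.sq_sqrt hB] at hsq
  simp only [B] at hsq
  linarith

theorem exists_forall_farthestDist_le [CompleteSpace E] (hne : S.Nonempty)
    (hS : Bornology.IsBounded S) : ∃ z, ∀ x, farthestDist S z ≤ farthestDist S x := by
  set R := ⨅ x, farthestDist S x
  have hR : ∀ x, R ≤ farthestDist S x :=
    ciInf_le ⟨0, forall_mem_range.2 fun _ => farthestDist_nonneg⟩
  have hR₀ : 0 ≤ R := le_ciInf fun _ => farthestDist_nonneg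
  have hmin : ∀ n : ℕ, ∃ u, farthestDist S u < R + 1 / (n + 1) := fun n =>
    exists_lt_of_ciInf_lt (lt_add_of_pos_right R Nat.one_div_pos_of_nat)
  choose u hu using hmin
  have hclose : ∀ n m N : ℕ, N ≤ n → N ≤ m →
      dist (u n) (u m) ≤ √(4 * ((R + 1 / (N + 1)) ^ 2 - R ^ 2)) := by
    intro n m N hn hm
    have hsq : ∀ k, N ≤ k → farthestDist S (u k) ^ 2 ≤ (R + 1 / (N + 1)) ^ 2 := fun k hk =>
      pow_le_pow_left₀ farthestDist_nonneg ((hu k).le.trans (by gcongr)) 2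
    have hmid := pow_le_pow_left₀ hR₀ (hR (midpoint ℝ (u n) (u m))) 2
    have key := sq_norm_sub_add_four_mul_sq_farthestDist_midpoint_le hne hS (u n) (u m)
    rw [dist_eq_norm]
    exact Real.le_sqrt_of_sq_le (by linarith [hsq n hn, hsq m hm])
  have hb : Tendsto (fun N : ℕ => √(4 * ((R + 1 / (N + 1)) ^ 2 - R ^ 2))) atTop (𝓝 0) := by
    convert (((tendsto_one_div_add_atTop_nhds_zero_nat.const_add R).pow 2).sub_const (R ^ 2)
      |>.const_mul 4).sqrt using 2
    simp
  obtain ⟨z, hz⟩ := cauchySeq_tendsto_of_complete (cauchySeq_of_le_tendsto_0 _ hclose hb)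
  have hlim : Tendsto (fun n => farthestDist S (u n)) atTop (𝓝 R) :=
    tendsto_of_tendsto_of_tendsto_of_le_of_le tendsto_const_nhds
      (by simpa using tendsto_one_div_add_atTop_nhds_zero_nat.const_add R)
      (fun n => hR (u n)) (fun n => (hu n).le)
  refine ⟨z, fun x => ?_⟩
  rw [tendsto_nhds_unique (((lipschitzWith_farthestDist hne hS).continuous.tendsto z).comp hz)
    hlim]
  exact hR x

theorem Bornology.IsBounded.exists_isFixedPt_of_isometry [CompleteSpace E]
    (hS : Bornology.IsBounded S) (hne : S.Nonempty) :
    ∃ z, ∀ T : E → E, Isometry T → T '' S = S → Function.IsFixedPt T z := by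
  obtain ⟨z, hz⟩ := exists_forall_farthestDist_le hne hS
  refine ⟨z, fun T hT hTS => ?_⟩
  have key := sq_norm_sub_add_four_mul_sq_farthestDist_midpoint_le hne hS (T z) z
  rw [farthestDist_apply_of_isometry hT hTS] at key
  have hmid := pow_le_pow_left₀ farthestDist_nonneg (hz (midpoint ℝ (T z) z)) 2
  exact sub_eq_zero.1 <| norm_le_zero_iff.1 <| by nlinarith [norm_nonneg (T z - z)]

end ChebyshevCenter

theorem norm_smul_of_isIsometricSMul {G E : Type*} [Monoid G] [NormedAddCommGroup E]
    [DistribMulAction G E] [IsIsometricSMul G E] (g : G) (v : E) : ‖g • v‖ = ‖v‖ := by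
  simpa only [smul_zero, dist_zero_right] using dist_smul g v 0

namespace groupCohomology

section Algebraic

variable {G A : Type*} [Monoid G] [AddCommGroup A] [DistribMulAction G A] {c : G → A}

theorem IsCocycle₁.smul_sub_eq_of_commute (hc : IsCocycle₁ c) {a b : G} (hab : Commute a b) :
    a • c b - c b = b • c a - c a := by
  have h := hc a b
  rw [hab.eq, hc b a] at h
  rw [sub_eq_sub_iff_add_eq_add, ← h, add_comm]

theorem IsCocycle₁.sub_coboundary (hc : IsCocycle₁ c) (x : A) :
    IsCocycle₁ fun g => c g - (g • x - x) := fun g h => by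
  simp only [hc g h, smul_sub, mul_smul]
  abel

theorem IsCocycle₁.eq_zero_of_commute (hc : IsCocycle₁ c) {H : Set G} (hH : ∀ s ∈ H, c s = 0)
    (hfix : ∀ f : A, (∀ s ∈ H, s • f = f) → f = 0) {g : G} (hg : ∀ s ∈ H, Commute s g) :
    c g = 0 :=
  hfix _ fun s hs => sub_eq_zero.1 <| by
    rw [hc.smul_sub_eq_of_commute (hg s hs), hH s hs, smul_zero, sub_zero]

end Algebraic

section Chain

variable {G A : Type*} [Group G] [AddCommGroup A] [DistribMulAction G A] {c : G → A}

theorem IsCocycle₁.eq_zero_of_iSup_eq_top (hc : IsCocycle₁ c) {ι : Sort*} {H : ι → Subgroup G}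
    (hgen : ⨆ n, H n = ⊤) (hH : ∀ n, ∀ g ∈ H n, c g = 0) (g : G) : c g = 0 :=
  Subgroup.iSup_induction H (C := fun g => c g = 0) (hgen ▸ Subgroup.mem_top g) hH
    (map_one_of_isCocycle₁ hc) fun x y hx hy => by rw [hc x y, hx, hy, smul_zero, add_zero]

theorem IsCocycle₁.eq_zero_of_chain (hc : IsCocycle₁ c) {H : ℕ → Subgroup G}
    (hcomm : ∀ n, ∀ g ∈ H n, ∀ h ∈ H (n + 1), Commute g h)
    (hfix : ∀ n, ∀ f : A, (∀ s ∈ H n, s • f = f) → f = 0) {j : ℕ}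
    (hj : ∀ g ∈ H j, c g = 0) (n : ℕ) : ∀ g ∈ H n, c g = 0 := by
  have hstep : ∀ n, (∀ g ∈ H n, c g = 0) ↔ ∀ g ∈ H (n + 1), c g = 0 := fun n =>
    ⟨fun h g hg => hc.eq_zero_of_commute h (hfix n) fun s hs => hcomm n s hs g hg,
      fun h g hg => hc.eq_zero_of_commute h (hfix (n + 1)) fun s hs => (hcomm n g hg s hs).symm⟩
  have hzero : ∀ n, (∀ g ∈ H n, c g = 0) ↔ ∀ g ∈ H 0, c g = 0 := fun n => by
    induction n with
    | zero => rfl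
    | succ n ih => rw [← hstep, ih]
  exact (hzero n).2 ((hzero j).1 hj)

end Chain

section Isometric

variable {G E : Type*} [Group G] [NormedAddCommGroup E] [DistribMulAction G E]
  [IsIsometricSMul G E] {c : G → E}

theorem IsCocycle₁.isBounded_image_of_commute (hc : IsCocycle₁ c) {Q H : Set G} {C : ℝ}
    (hC : 0 ≤ C) (hgap : ∀ f : E, ‖f‖ ≤ C * ⨆ a : Q, ‖(a : G) • f - f‖)
    (hQ : Bornology.IsBounded (c '' Q)) (hcomm : ∀ a ∈ Q, ∀ b ∈ H, Commute a b) :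
    Bornology.IsBounded (c '' H) := by
  obtain ⟨K, hK, hcK⟩ := hQ.exists_pos_norm_le
  refine isBounded_iff_forall_norm_le.2 ⟨C * (2 * K), forall_mem_image.2 fun b hb => ?_⟩
  refine (hgap (c b)).trans <|
    mul_le_mul_of_nonneg_left (Real.iSup_le (fun a => ?_) (by positivity)) hC
  rw [hc.smul_sub_eq_of_commute (hcomm a a.2 b hb)]
  calc ‖b • c a - c a‖ ≤ ‖b • c a‖ + ‖c a‖ := norm_sub_le _ _
    _ ≤ 2 * K := by
      rw [norm_smul_of_isIsometricSMul, ← two_mul]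
      exact mul_le_mul_of_nonneg_left (hcK _ (mem_image_of_mem c a.2)) zero_le_two

theorem IsCocycle₁.exists_smul_sub_eq_of_isBounded [InnerProductSpace ℝ E] [CompleteSpace E]
    (hc : IsCocycle₁ c) {H : Subgroup G} (hH : Bornology.IsBounded (c '' H)) :
    ∃ x : E, ∀ b ∈ H, b • x - x = c b := by
  obtain ⟨z, hz⟩ := hH.exists_isFixedPt_of_isometry ⟨c 1, mem_image_of_mem c H.one_mem⟩
  refine ⟨-z, fun b hb => ?_⟩
  -- `c '' H` is the orbit of `0` under the affine isometric action `ξ ↦ b • ξ + c b`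
  have hTc : ∀ h, b • c h + c b = c (b * h) := fun h => by rw [hc, add_comm]
  have hT : Isometry fun ξ => b • ξ + c b :=
    Isometry.of_dist_eq fun ξ η => by rw [dist_add_right, dist_smul]
  have hTS : (fun ξ => b • ξ + c b) '' (c '' H) = c '' H := by
    rw [image_image]
    ext ξ
    refine ⟨?_, fun ⟨h, hh, hξ⟩ => ⟨b⁻¹ * h, H.mul_mem (H.inv_mem hb) hh, ?_⟩⟩
    · rintro ⟨h, hh, rfl⟩
      exact ⟨b * h, H.mul_mem hb hh, (hTc h).symm⟩
    · show b • c (b⁻¹ * h) + c b = ξ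
      rw [hTc, mul_inv_cancel_left, hξ]
  have hfix : b • z + c b = z := hz _ hT hTS
  rw [smul_neg, neg_sub_neg, eq_comm, eq_sub_iff_add_eq, add_comm]
  exact hfix

theorem IsCocycle₁.isCoboundary₁_of_commute_succ [TopologicalSpace G] [InnerProductSpace ℝ E]
    [CompleteSpace E] (hc : IsCocycle₁ c) (hcont : Continuous c) {H : ℕ → Subgroup G}
    (hgen : ⨆ n, H n = ⊤) (hcomm : ∀ n, ∀ g ∈ H n, ∀ h ∈ H (n + 1), Commute g h)
    (hfix : ∀ n, ∀ f : E, (∀ s ∈ H n, s • f = f) → f = 0) {i : ℕ} {Q : Set G}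
    (hQi : Q ⊆ H i) (hQ : IsCompact Q) {C : ℝ} (hC : 0 ≤ C)
    (hgap : ∀ f : E, ‖f‖ ≤ C * ⨆ a : Q, ‖(a : G) • f - f‖) : IsCoboundary₁ c := by
  have hbdd : Bornology.IsBounded (c '' H (i + 1)) :=
    hc.isBounded_image_of_commute hC hgap (hQ.image hcont).isBounded
      fun a ha b hb => hcomm i a (hQi ha) b hb
  obtain ⟨x, hx⟩ := hc.exists_smul_sub_eq_of_isBounded hbdd
  have hc' := hc.sub_coboundary x
  have hzero := hc'.eq_zero_of_iSup_eq_top hgen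
    (hc'.eq_zero_of_chain hcomm hfix fun b hb => by rw [hx b hb, sub_self])
  exact ⟨x, fun g => (sub_eq_zero.1 (hzero g)).symm⟩

end Isometric

end groupCohomology

instance QuotientGroup.measurableConstSMul {G : Type*} [Group G] [MeasurableSpace G]
    [MeasurableMul G] (Γ : Subgroup G) : MeasurableConstSMul G (G ⧸ Γ) where
  measurable_const_smul g := QuotientGroup.measurable_coe.comp (measurable_const_mul g)

namespace MeasureTheory.Lp

variable {G α E : Type*} [Group G] [MeasurableSpace α] [MulAction G α]
  [MeasurableConstSMul G α] [NormedAddCommGroup E] {μ : Measure α} [SMulInvariantMeasure G α μ]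
  {p : ENNReal}

noncomputable instance koopman : DistribMulAction G (Lp E p μ) :=
  DistribMulAction.compHom _ (MonoidHom.mk' (fun g => (DomMulAct.mk g)⁻¹) fun _ _ => by
    simp only [DomMulAct.mk_mul, mul_inv_rev])

instance [Fact (1 ≤ p)] : IsIsometricSMul G (Lp E p μ) :=
  ⟨fun g => isometry_smul (Lp E p μ) (DomMulAct.mk g)⁻¹⟩

theorem koopman_smul_ae_eq (g : G) (f : Lp E p μ) : ⇑(g • f) =ᵐ[μ] fun x => f (g⁻¹ • x) :=
  DomMulAct.smul_Lp_ae_eq _ f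

theorem koopman_smul_eq_self_iff (g : G) (f : Lp E p μ) :
    g • f = f ↔ (fun x => f (g⁻¹ • x)) =ᵐ[μ] f :=
  ⟨fun h => (koopman_smul_ae_eq g f).symm.trans (by rw [h]),
    fun h => Lp.ext ((koopman_smul_ae_eq g f).trans h)⟩

theorem coeFn_sub_koopman_smul (g : G) (f : Lp E p μ) :
    ⇑(f - g • f) =ᵐ[μ] fun x => f x - f (g⁻¹ • x) := by
  filter_upwards [Lp.coeFn_sub f (g • f), koopman_smul_ae_eq g f] with x hsub hsmul
  rw [hsub, Pi.sub_apply, hsmul]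

theorem norm_koopman_smul_sub (g : G) (f : Lp E p μ) :
    ‖g • f - f‖ = (eLpNorm (fun x => f (g⁻¹ • x) - f x) p μ).toReal := by
  rw [← neg_sub, Lp.norm_neg, Lp.norm_def, eLpNorm_congr_ae (coeFn_sub_koopman_smul g f)]
  exact congrArg ENNReal.toReal (eLpNorm_sub_comm (⇑f) (fun x => f (g⁻¹ • x)) p μ)

theorem isCocycle₁_of_ae_eq {c : G → Lp E p μ}
    (hc : ∀ g h, (c (g * h) : α → E) =ᵐ[μ] fun x => c g x + c h (g⁻¹ • x)) :
    groupCohomology.IsCocycle₁ c := fun g h => by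
  refine Lp.ext ((hc g h).trans ?_)
  filter_upwards [Lp.coeFn_add (g • c h) (c g), koopman_smul_ae_eq g (c h)] with x hadd hsmul
  rw [hadd, Pi.add_apply, hsmul, add_comm]

end MeasureTheory.Lp

theorem stmt9_general {G : Type*} [Group G] [TopologicalSpace G] [IsTopologicalGroup G]
    [MeasurableSpace G] [BorelSpace G]
    (Γ : Subgroup G)
    (μ : Measure (G ⧸ Γ))
    [SMulInvariantMeasure G (G ⧸ Γ) μ]
    (G_ : ℕ → Subgroup G) (hgen : (⨆ n, G_ n) = ⊤)
    (hcomm : ∀ n : ℕ, ∀ g ∈ G_ n, ∀ h ∈ G_ (n + 1), Commute g h)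
    (hnoinv : ∀ n : ℕ, ∀ f : Lp ℂ 2 μ,
      (∀ g ∈ G_ n, (fun x => f (g⁻¹ • x)) =ᵐ[μ] f) → f = 0)
    (hgap : ∃ i : ℕ, ∃ Q : Set G, Q ⊆ (G_ i : Set G) ∧ IsCompact Q ∧
      ∃ C : ℝ, 0 < C ∧ ∀ f : Lp ℂ 2 μ,
        ‖f‖ ≤ C * ⨆ g : Q, (eLpNorm (fun x => f ((g : G)⁻¹ • x) - f x) 2 μ).toReal) :
    ∀ c : G → Lp ℂ 2 μ, Continuous c →
      (∀ g h : G, (c (g * h) : G ⧸ Γ → ℂ) =ᵐ[μ] fun x => c g x + c h (g⁻¹ • x)) →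
      ∃ ξ : Lp ℂ 2 μ, ∀ g : G, (c g : G ⧸ Γ → ℂ) =ᵐ[μ] fun x => ξ x - ξ (g⁻¹ • x) := by
  obtain ⟨i, Q, hQi, hQ, C, hC, hgapC⟩ := hgap
  intro c hcont hcoc
  obtain ⟨x, hx⟩ := (Lp.isCocycle₁_of_ae_eq hcoc).isCoboundary₁_of_commute_succ hcont hgen hcomm
    (fun n f hf => hnoinv n f fun g hg => (Lp.koopman_smul_eq_self_iff g f).1 (hf g hg))
    hQi hQ hC.le (by simpa only [Lp.norm_koopman_smul_sub] using hgapC)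
  refine ⟨-x, fun g => ?_⟩
  rw [← hx g, ← neg_sub_neg, ← smul_neg]
  exact Lp.coeFn_sub_koopman_smul g (-x)

theorem stmt9 {G : Type*} [Group G] [TopologicalSpace G] [IsTopologicalGroup G]
    [LocallyCompactSpace G] [SecondCountableTopology G]
    [MeasurableSpace G] [BorelSpace G]
    (μG : Measure G) [μG.IsHaarMeasure] [μG.IsMulRightInvariant]
    (Γ : Subgroup G) [DiscreteTopology Γ]
    (F : Set G) (hFmeas : MeasurableSet F)
    (hFdom : IsFundamentalDomain Γ.op F μG)
    (μ : Measure (G ⧸ Γ))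
    (hμ : μ = Measure.map (QuotientGroup.mk : G → G ⧸ Γ) (μG.restrict F))
    [SMulInvariantMeasure G (G ⧸ Γ) μ]
    (G_ : ℕ → Subgroup G) (hgen : (⨆ n, G_ n) = ⊤)
    (hcomm : ∀ n : ℕ, ∀ g ∈ G_ n, ∀ h ∈ G_ (n + 1), Commute g h)
    (hnoinv : ∀ n : ℕ, ∀ f : Lp ℂ 2 μ,
      (∀ g ∈ G_ n, (fun x => f (g⁻¹ • x)) =ᵐ[μ] f) → f = 0)
    (hgap : ∃ i : ℕ, ∃ Q : Set G, Q ⊆ (G_ i : Set G) ∧ IsCompact Q ∧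
      ∃ C : ℝ, 0 < C ∧ ∀ f : Lp ℂ 2 μ,
        ‖f‖ ≤ C * ⨆ g : Q, (eLpNorm (fun x => f ((g : G)⁻¹ • x) - f x) 2 μ).toReal) :
    ∀ c : G → Lp ℂ 2 μ, Continuous c →
      (∀ g h : G, (c (g * h) : G ⧸ Γ → ℂ) =ᵐ[μ] fun x => c g x + c h (g⁻¹ • x)) →
      ∃ ξ : Lp ℂ 2 μ, ∀ g : G, (c g : G ⧸ Γ → ℂ) =ᵐ[μ] fun x => ξ x - ξ (g⁻¹ • x) :=
  stmt9_general Γ μ G_ hgen hcomm hnoinv hgap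
end

section
/- Let X be a connected, locally finite simple graph with vertex set V, and let G be a locally compact second countable group acting on V by graph automorphisms (each g ∈ G preserves adjacency), transitively on V, and with compact vertex stabilizers {g ∈ G : g·v = v} for every v ∈ V. Let Γ ≤ G be a discrete subgroup and fix a vertex v₀ ∈ V. Suppose Ã ⊆ V is a Γ-invariant set of vertices such that the set of edges of X joining a vertex of Ã to a vertex of V \ Ã meets only finitely many Γ-orbits of edges. Put E := {g ∈ G : g⁻¹·v₀ ∈ Ã}. Then E is invariant under right translation by Γ, and for every g ∈ G there is a compact set C ⊆ G with E △ gE ⊆ C·Γ; equivalently, the image of E △ gE in the quotient space G/Γ has compact closure. -/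
/-! A walk from `v₀` to `g • v₀` is a fixed finite set of vertices. If `k` lies in `E ∆ gE`, then
exactly one endpoint of this walk lies in `k • Ã`, so the walk meets an edge leaving `k • Ã`;
pulling it back by `k` gives a boundary edge of `Ã`, which is a `Γ`-translate of one of finitely
many orbit representatives `r`. Hence `k ∈ {h | h • r.1 = u} * Γ` for a vertex `u` of the walk,
and each of these finitely many sets is empty or a translate of a compact stabilizer. -/

open Set Pointwise

theorem SimpleGraph.Walk.exists_mem_support_adj_mem_not_mem {V : Type*} {X : SimpleGraph V}
    {x y : V} (p : X.Walk x y) {A : Set V} (h : Xor (x ∈ A) (y ∈ A)) :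
    ∃ u ∈ p.support, ∃ w, X.Adj u w ∧ u ∈ A ∧ w ∉ A := by
  have boundary {x y : V} (q : X.Walk x y) (hx : x ∈ A) (hy : y ∉ A) :
      ∃ u ∈ q.support, ∃ w, X.Adj u w ∧ u ∈ A ∧ w ∉ A := by
    obtain ⟨d, hd, hfst, hsnd⟩ := q.exists_boundary_dart A hx hy
    exact ⟨d.fst, q.dart_fst_mem_support_of_mem_darts hd, d.snd, d.adj, hfst, hsnd⟩
  rcases h with ⟨hx, hy⟩ | ⟨hy, hx⟩
  · exact boundary p hx hy
  · simpa only [support_reverse, List.mem_reverse] using boundary p.reverse hy hx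

theorem MulAction.exists_finite_orbit_representatives {H α : Type*} [Group H] [MulAction H α]
    {S : Set α} (hS : (Quotient.mk (orbitRel H α) '' S).Finite) :
    ∃ R : Set α, R.Finite ∧ ∀ s ∈ S, ∃ r ∈ R, ∃ h : H, h • s = r := by
  refine ⟨Quotient.out '' (Quotient.mk (orbitRel H α) '' S), hS.image _, fun s hs => ?_⟩
  refine ⟨_, mem_image_of_mem _ (mem_image_of_mem _ hs), ?_⟩
  exact mem_orbit_iff.mp (orbitRel_apply.mp (Quotient.exact (Quotient.out_eq _)))

theorem isCompact_setOf_smul_eq {G V : Type*} [Group G] [TopologicalSpace G] [ContinuousMul G]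
    [MulAction G V] {v : V} (hv : IsCompact {g : G | g • v = v}) (u : V) :
    IsCompact {g : G | g • v = u} := by
  rcases eq_empty_or_nonempty {g : G | g • v = u} with hempty | ⟨g₀, hg₀⟩
  · exact hempty ▸ isCompact_empty
  · have htranslate : {g : G | g • v = u} = g₀ • {g : G | g • v = v} := by
      ext g
      rw [mem_smul_set_iff_inv_smul_mem]
      simp only [mem_ofPred_eq, smul_eq_mul, mul_smul, inv_smul_eq_iff, hg₀.symm]
    exact htranslate ▸ hv.smul g₀

theorem mem_symmDiff_smul_setOf_inv_smul_mem_iff {G V : Type*} [Group G] [MulAction G V]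
    {A : Set V} {v : V} {g k : G} :
    k ∈ symmDiff {k : G | k⁻¹ • v ∈ A} (g • {k : G | k⁻¹ • v ∈ A}) ↔
      Xor (v ∈ k • A) (g • v ∈ k • A) := by
  have hsmul : k ∈ g • {k : G | k⁻¹ • v ∈ A} ↔ k⁻¹ • g • v ∈ A := by
    rw [mem_smul_set_iff_inv_smul_mem, mem_ofPred_eq, smul_eq_mul, mul_inv_rev, inv_inv, mul_smul]
  rw [mem_symmDiff, hsmul, mem_ofPred_eq, mem_smul_set_iff_inv_smul_mem,
    mem_smul_set_iff_inv_smul_mem]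
  rfl

theorem stmt12_general {G V : Type*} [Group G] [TopologicalSpace G] [IsTopologicalGroup G]
    (X : SimpleGraph V) (hconn : X.Connected)
    [MulAction G V]
    (hauto : ∀ (g : G) (v w : V), X.Adj v w → X.Adj (g • v) (g • w))
    (hstab : ∀ v : V, IsCompact {g : G | g • v = v})
    (Γ : Subgroup G)
    (v₀ : V) (Atil : Set V) (hinv : ∀ γ : Γ, (γ : G) • Atil = Atil)
    (hedge : Set.Finite (Quotient.mk (MulAction.orbitRel Γ (V × V)) ''
      {p : V × V | X.Adj p.1 p.2 ∧ p.1 ∈ Atil ∧ p.2 ∉ Atil})) :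
    (∀ g ∈ {k : G | k⁻¹ • v₀ ∈ Atil}, ∀ γ : Γ, g * (γ : G) ∈ {k : G | k⁻¹ • v₀ ∈ Atil}) ∧
    ∀ g : G, ∃ C : Set G, IsCompact C ∧
      symmDiff {k : G | k⁻¹ • v₀ ∈ Atil} (g • {k : G | k⁻¹ • v₀ ∈ Atil})
        ⊆ C * (Γ : Set G) := by
  refine ⟨fun g hg γ => ?_, fun g => ?_⟩
  · have hmem : (γ⁻¹ : G) • g⁻¹ • v₀ ∈ Atil := by
      exact (hinv γ⁻¹).subset (smul_mem_smul_set hg)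
    rwa [mem_ofPred_eq, mul_inv_rev, mul_smul]
  obtain ⟨p⟩ := hconn.preconnected v₀ (g • v₀)
  obtain ⟨R, hRfin, hR⟩ := MulAction.exists_finite_orbit_representatives hedge
  refine ⟨⋃ u ∈ {u | u ∈ p.support}, ⋃ r ∈ R, {h : G | h • r.1 = u}, ?_, fun k hk => ?_⟩
  · exact p.support.finite_toSet.isCompact_biUnion fun u _ =>
      hRfin.isCompact_biUnion fun r _ => isCompact_setOf_smul_eq (hstab r.1) u
  obtain ⟨u, hu, w, huw, hua, hwa⟩ :=
    p.exists_mem_support_adj_mem_not_mem (mem_symmDiff_smul_setOf_inv_smul_mem_iff.mp hk)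
  have hedge_k : (k⁻¹ • u, k⁻¹ • w) ∈ {p : V × V | X.Adj p.1 p.2 ∧ p.1 ∈ Atil ∧ p.2 ∉ Atil} :=
    ⟨hauto k⁻¹ u w huw, mem_smul_set_iff_inv_smul_mem.mp hua,
      fun h => hwa (mem_smul_set_iff_inv_smul_mem.mpr h)⟩
  obtain ⟨r, hr, γ, rfl⟩ := hR _ hedge_k
  refine ⟨k * (γ : G)⁻¹, ?_, γ, γ.2, inv_mul_cancel_right k (γ : G)⟩
  simp only [mem_iUnion, mem_ofPred_eq]
  exact ⟨u, hu, _, hr, by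
    rw [Prod.smul_fst, Subgroup.smul_def, smul_smul, smul_smul, inv_mul_cancel_right,
      mul_inv_cancel, one_smul]⟩

theorem stmt12 {G V : Type*} [Group G] [TopologicalSpace G] [IsTopologicalGroup G]
    [LocallyCompactSpace G] [SecondCountableTopology G]
    (X : SimpleGraph V) (hconn : X.Connected) (hlf : X.LocallyFinite)
    [MulAction G V]
    (hauto : ∀ (g : G) (v w : V), X.Adj v w → X.Adj (g • v) (g • w))
    [MulAction.IsPretransitive G V]
    (hstab : ∀ v : V, IsCompact {g : G | g • v = v})
    (Γ : Subgroup G) [DiscreteTopology Γ]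
    (v₀ : V) (Atil : Set V) (hinv : ∀ γ : Γ, (γ : G) • Atil = Atil)
    (hedge : Set.Finite (Quotient.mk (MulAction.orbitRel Γ (V × V)) ''
      {p : V × V | X.Adj p.1 p.2 ∧ p.1 ∈ Atil ∧ p.2 ∉ Atil})) :
    (∀ g ∈ {k : G | k⁻¹ • v₀ ∈ Atil}, ∀ γ : Γ, g * (γ : G) ∈ {k : G | k⁻¹ • v₀ ∈ Atil}) ∧
    ∀ g : G, ∃ C : Set G, IsCompact C ∧
      symmDiff {k : G | k⁻¹ • v₀ ∈ Atil} (g • {k : G | k⁻¹ • v₀ ∈ Atil})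
        ⊆ C * (Γ : Set G) :=
  stmt12_general X hconn hauto hstab Γ v₀ Atil hinv hedge
end

section
/- Let X be a connected, locally finite simple graph with vertex set V, and let G be a unimodular locally compact second countable group with Haar measure μ_G acting on V by graph automorphisms, transitively on V, and with compact open vertex stabilizers. Let Γ ≤ G be a discrete subgroup admitting a finite index subgroup Γ' ≤ Γ whose action on V is free, let μ denote the G-invariant quotient measure on G/Γ, and fix v₀ ∈ V. Suppose Ã ⊆ V is a Γ-invariant set of vertices meeting infinitely many Γ-orbits and whose complement V \ Ã also meets infinitely many Γ-orbits. Put E := {g ∈ G : g⁻¹·v₀ ∈ Ã} and let B ⊆ G/Γ be the image of E under the quotient map G → G/Γ. Then μ(B) = ∞ and μ((G/Γ) \ B) = ∞. -/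
/-!
Choose `R ⊆ Ã` meeting infinitely many `Γ`-orbits, each exactly once. The set
`U = {g | g⁻¹ • v₀ ∈ R}` is a disjoint union of infinitely many right translates of the open
stabilizer of `v₀`, so `μ_G U = ∞`. Since `R` meets each orbit once, the `γ ∈ Γ` with `x * γ ∈ U`
form a coset of the `Γ`-stabilizer of a vertex; this stabilizer meets `Γ'` trivially, so it has at
most `[Γ : Γ']` elements. Unfolding `μ_G U` over the fundamental domain then gives
`μ_G U ≤ [Γ : Γ'] · μ(UΓ/Γ)`, and `UΓ/Γ ⊆ B`. By `Γ`-invariance of `Ã`, the complement of `B` is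
the image of `{g | g⁻¹ • v₀ ∉ Ã}`, to which the same argument applies.
-/

open MeasureTheory Set Pointwise

namespace MeasureTheory.IsFundamentalDomain

variable {H α : Type*} [Group H] [Countable H] [MulAction H α] [MeasurableSpace α]
  [MeasurableConstSMul H α] {μ : Measure α} [SMulInvariantMeasure H α μ]

theorem measure_le_mul_measure_saturation_inter {F : Set α} (hF : IsFundamentalDomain H F μ)
    {U : Set α} (hU : MeasurableSet U) {n : ℕ∞} (hn : ∀ x, {h : H | h • x ∈ U}.encard ≤ n) :
    μ U ≤ n * μ ({x | ∃ h : H, h • x ∈ U} ∩ F) := by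
  have hsat : MeasurableSet {x | ∃ h : H, h • x ∈ U} := by
    rw [ofPred_exists]
    exact MeasurableSet.iUnion fun h => measurable_const_smul h hU
  have hcount : ∀ x, ∑' h : H, U.indicator 1 (h • x) = ({h : H | h • x ∈ U}.encard : ENNReal) := by
    intro x
    rw [← ENNReal.tsum_set_one, tsum_subtype _ fun _ => (1 : ENNReal)]
    congr 1 with h
  have hbound : ∀ x, ∑' h : H, U.indicator 1 (h • x) ≤
      {x | ∃ h : H, h • x ∈ U}.indicator (fun _ => (n : ENNReal)) x := by
    intro x
    by_cases hx : ∃ h : H, h • x ∈ U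
    · rw [hcount, indicator_of_mem (show x ∈ {x | ∃ h : H, h • x ∈ U} from hx)]
      exact_mod_cast hn x
    · push Not at hx
      simp [hx]
  calc μ U = ∫⁻ x, U.indicator 1 x ∂μ := (lintegral_indicator_one hU).symm
    _ = ∫⁻ x in F, ∑' h : H, U.indicator 1 (h • x) ∂μ := by
      rw [hF.lintegral_eq_tsum'', ← lintegral_tsum (f := fun h x => U.indicator 1 (h • x)) fun h =>
        ((measurable_one.indicator hU).comp (measurable_const_smul h)).aemeasurable]
    _ ≤ ∫⁻ x in F, {x | ∃ h : H, h • x ∈ U}.indicator (fun _ => (n : ENNReal)) x ∂μ :=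
      lintegral_mono hbound
    _ = n * μ ({x | ∃ h : H, h • x ∈ U} ∩ F) := by
      rw [lintegral_indicator_const hsat, Measure.restrict_apply hsat]

end MeasureTheory.IsFundamentalDomain

theorem Subgroup.encard_le_relIndex_of_inf_eq_bot {G : Type*} [Group G] {H K L : Subgroup G}
    (hKL : K ≤ L) (hHK : H ⊓ K = ⊥) (hHL : H.relIndex L ≠ 0) :
    (K : Set G).encard ≤ H.relIndex L := by
  have hcard : Nat.card K = H.relIndex K := by
    rw [← relIndex_bot_left, ← hHK, inf_relIndex_right]
  have : Finite K := Nat.finite_of_card_ne_zero (hcard ▸ mt (relIndex_eq_zero_of_le_right hKL) hHL)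
  rw [encard, SetLike.coe_sort_coe, ENat.card_eq_coe_natCard, hcard]
  exact_mod_cast relIndex_le_of_le_right hKL hHL

section OrbitMap

variable {G V : Type*} [Group G] [MulAction G V]

theorem setOf_inv_smul_eq_eq_preimage_mul_right {v₀ v : V} {h : G} (hh : h • v₀ = v) :
    {g : G | g⁻¹ • v₀ = v} = (· * h) ⁻¹' {g | g • v₀ = v₀} := by
  ext g
  rw [mem_ofPred_eq, mem_preimage, mem_ofPred_eq, mul_smul, hh, inv_smul_eq_iff, eq_comm]

theorem isOpen_setOf_inv_smul_mem [TopologicalSpace G] [IsTopologicalGroup G] {v₀ : V}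
    (hopen : IsOpen {g : G | g • v₀ = v₀}) (S : Set V) : IsOpen {g : G | g⁻¹ • v₀ ∈ S} := by
  refine isOpen_iff_forall_mem_open.2 fun g hg => ⟨{x | x⁻¹ • v₀ = g⁻¹ • v₀}, ?_, ?_, rfl⟩
  · rintro x (hx : x⁻¹ • v₀ = g⁻¹ • v₀)
    exact (hx ▸ hg : x⁻¹ • v₀ ∈ S)
  · rw [setOf_inv_smul_eq_eq_preimage_mul_right rfl]
    exact hopen.preimage (continuous_mul_const _)

theorem encard_setOf_mem_smul_mem_le {Γ : Subgroup G} {R : Set V}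
    (hR : R.InjOn (Quotient.mk (MulAction.orbitRel Γ V))) (w : V) :
    {g : G | g ∈ Γ ∧ g • w ∈ R}.encard ≤
      ((MulAction.stabilizer G w ⊓ Γ : Subgroup G) : Set G).encard := by
  rcases eq_empty_or_nonempty {g : G | g ∈ Γ ∧ g • w ∈ R} with hempty | ⟨g₀, hg₀Γ, hg₀R⟩
  · simp [hempty]
  set K : Subgroup G := MulAction.stabilizer G w ⊓ Γ
  calc {g : G | g ∈ Γ ∧ g • w ∈ R}.encard ≤ (g₀ • (K : Set G)).encard := by
        refine encard_le_encard fun g hg => ?_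
        obtain ⟨hgΓ, hgR⟩ := hg
        have hsame : g • w = g₀ • w := hR hgR hg₀R <| Quotient.sound <|
          ⟨⟨g * g₀⁻¹, mul_mem hgΓ (inv_mem hg₀Γ)⟩, by simp [Subgroup.smul_def, mul_smul]⟩
        refine mem_smul_set.2
          ⟨g₀⁻¹ * g, Subgroup.mem_inf.2 ⟨?_, mul_mem (inv_mem hg₀Γ) hgΓ⟩, by simp⟩
        simp [MulAction.mem_stabilizer_iff, mul_smul, hsame]
    _ = (K : Set G).encard := encard_smul_set g₀ _

theorem encard_setOf_op_smul_mem_le {v₀ : V} {Γ Γ' : Subgroup G} (hfi : Γ'.relIndex Γ ≠ 0)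
    (hfree : ∀ γ ∈ Γ', ∀ v : V, γ • v = v → γ = 1) {R : Set V}
    (hR : R.InjOn (Quotient.mk (MulAction.orbitRel Γ V))) (x : G) :
    {h : Γ.op | h • x ∈ {g : G | g⁻¹ • v₀ ∈ R}}.encard ≤ Γ'.relIndex Γ := by
  have hdisj : Γ' ⊓ (MulAction.stabilizer G (x⁻¹ • v₀) ⊓ Γ) = ⊥ :=
    eq_bot_iff.2 fun g hg => hfree g hg.1 _ hg.2.1
  calc {h : Γ.op | h • x ∈ {g : G | g⁻¹ • v₀ ∈ R}}.encard
      ≤ {g : G | g ∈ Γ ∧ g • (x⁻¹ • v₀) ∈ R}.encard := by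
        refine encard_le_encard_of_injOn (f := fun h => (MulOpposite.unop (h : Gᵐᵒᵖ))⁻¹)
          (fun h hh => ⟨inv_mem (Subgroup.mem_op.1 h.2), ?_⟩) fun h _ h' _ hhh' => ?_
        · simpa [mul_smul, Subgroup.smul_def, MulOpposite.smul_eq_mul_unop] using hh
        · simpa using hhh'
    _ ≤ _ := encard_setOf_mem_smul_mem_le hR _
    _ ≤ _ := Subgroup.encard_le_relIndex_of_inf_eq_bot inf_le_right hdisj hfi

end OrbitMap

theorem MeasureTheory.measure_preimage_eq_top_of_infinite {α β : Type*} [MeasurableSpace α]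
    {μ : Measure α} {f : α → β} {R : Set β} (hR : R.Infinite)
    (hmeas : ∀ y ∈ R, MeasurableSet (f ⁻¹' {y})) {c : ENNReal} (hc : c ≠ 0)
    (hle : ∀ y ∈ R, c ≤ μ (f ⁻¹' {y})) : μ (f ⁻¹' R) = ⊤ := by
  set R' := range fun n => (hR.natEmbedding R n : β)
  have hR'R : R' ⊆ R := range_subset_iff.2 fun n => (hR.natEmbedding R n).2
  have : Infinite R' := (infinite_range_of_injective
    (Subtype.val_injective.comp (hR.natEmbedding R).injective)).to_subtype
  refine top_le_iff.1 ?_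
  calc ⊤ = ∑' _ : R', c := (ENNReal.tsum_const_eq_top_of_ne_zero hc).symm
    _ ≤ ∑' y : R', μ (f ⁻¹' {(y : β)}) := ENNReal.tsum_le_tsum fun y => hle y (hR'R y.2)
    _ = μ (f ⁻¹' R') :=
      tsum_measure_preimage_singleton (countable_range _) fun y hy => hmeas y (hR'R hy)
    _ ≤ μ (f ⁻¹' R) := measure_mono (preimage_mono hR'R)

theorem QuotientGroup.image_mk_compl {G : Type*} [Group G] {Γ : Subgroup G} {s : Set G}
    (hs : ∀ γ : Γ, (· * (γ : G)) ⁻¹' s = s) :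
    (QuotientGroup.mk '' sᶜ : Set (G ⧸ Γ)) = (QuotientGroup.mk '' s)ᶜ := by
  have hsat : QuotientGroup.mk ⁻¹' (QuotientGroup.mk '' s : Set (G ⧸ Γ)) = s := by
    simp only [QuotientGroup.preimage_image_mk, hs, iUnion_const]
  calc (QuotientGroup.mk '' sᶜ : Set (G ⧸ Γ))
      = QuotientGroup.mk '' (QuotientGroup.mk ⁻¹' (QuotientGroup.mk '' s : Set (G ⧸ Γ)))ᶜ := by
        rw [hsat]
    _ = (QuotientGroup.mk '' s)ᶜ := by
        rw [← preimage_compl, image_preimage_eq _ QuotientGroup.mk_surjective]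

section HaarMeasure

variable {G V : Type*} [Group G] [TopologicalSpace G] [IsTopologicalGroup G] [MeasurableSpace G]
  [BorelSpace G] [MulAction G V] {v₀ : V}

theorem measure_setOf_inv_smul_mem_eq_top (μG : Measure G) [μG.IsOpenPosMeasure]
    [μG.IsMulRightInvariant] [MulAction.IsPretransitive G V] (hopen : IsOpen {g : G | g • v₀ = v₀})
    {R : Set V} (hR : R.Infinite) : μG {g : G | g⁻¹ • v₀ ∈ R} = ⊤ := by
  refine measure_preimage_eq_top_of_infinite hR
    (fun v _ => (isOpen_setOf_inv_smul_mem hopen {v}).measurableSet)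
    (hopen.measure_pos μG ⟨1, one_smul G v₀⟩).ne' fun v _ => ?_
  obtain ⟨h, hh⟩ := MulAction.exists_smul_eq G v₀ v
  exact (setOf_inv_smul_eq_eq_preimage_mul_right hh ▸ measure_preimage_mul_right μG h _).ge

theorem measure_image_mk_setOf_inv_smul_mem_eq_top {μG : Measure G} [μG.IsOpenPosMeasure]
    [μG.IsMulRightInvariant] [MulAction.IsPretransitive G V]
    (hopen : IsOpen {g : G | g • v₀ = v₀}) {Γ : Subgroup G} [Countable Γ]
    {Γ' : Subgroup G} (hfi : Γ'.relIndex Γ ≠ 0) (hfree : ∀ γ ∈ Γ', ∀ v : V, γ • v = v → γ = 1)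
    {F : Set G} (hF : IsFundamentalDomain Γ.op F μG) {A : Set V}
    (hA : (Quotient.mk (MulAction.orbitRel Γ V) '' A).Infinite) :
    (μG.restrict F).map QuotientGroup.mk
      (QuotientGroup.mk '' {g : G | g⁻¹ • v₀ ∈ A} : Set (G ⧸ Γ)) = ⊤ := by
  obtain ⟨R, hRA, hR⟩ := exists_subset_bijOn A (Quotient.mk (MulAction.orbitRel Γ V))
  set U := {g : G | g⁻¹ • v₀ ∈ R}
  have hU : μG U = ⊤ :=
    measure_setOf_inv_smul_mem_eq_top μG hopen fun hfin => hA (hR.image_eq ▸ hfin.image _)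
  have hsatF : μG ({x | ∃ h : Γ.op, h • x ∈ U} ∩ F) = ⊤ := by
    have := hU ▸ hF.measure_le_mul_measure_saturation_inter
      (isOpen_setOf_inv_smul_mem hopen R).measurableSet
      (encard_setOf_op_smul_mem_le hfi hfree hR.injOn)
    exact ((ENNReal.mul_eq_top.1 (top_le_iff.1 this)).resolve_right (by simp)).2
  have hsat : {x | ∃ h : Γ.op, h • x ∈ U} ⊆
      QuotientGroup.mk ⁻¹' (QuotientGroup.mk '' {g : G | g⁻¹ • v₀ ∈ A} : Set (G ⧸ Γ)) := by
    rintro x ⟨h, hh⟩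
    exact ⟨x * MulOpposite.unop (h : Gᵐᵒᵖ), hRA hh, QuotientGroup.mk_mul_of_mem x h.2⟩
  refine top_le_iff.1 ?_
  calc ⊤ = μG ({x | ∃ h : Γ.op, h • x ∈ U} ∩ F) := hsatF.symm
    _ ≤ μG.restrict F (QuotientGroup.mk ⁻¹' (QuotientGroup.mk '' {g : G | g⁻¹ • v₀ ∈ A})) :=
      (measure_mono (inter_subset_inter_left F hsat)).trans (Measure.le_restrict_apply _ _)
    _ ≤ _ :=
      Measure.le_map_apply (measurable_quotient_mk'' (s := QuotientGroup.leftRel Γ)).aemeasurable _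

end HaarMeasure

theorem stmt13_general {G V : Type*} [Group G] [TopologicalSpace G] [IsTopologicalGroup G]
    [SecondCountableTopology G]
    [MeasurableSpace G] [BorelSpace G]
    (μG : Measure G) [μG.IsHaarMeasure] [μG.IsMulRightInvariant]
    [MulAction G V]
    [MulAction.IsPretransitive G V]
    (hstab : ∀ v : V, IsCompact {g : G | g • v = v} ∧ IsOpen {g : G | g • v = v})
    (Γ : Subgroup G) [DiscreteTopology Γ]
    (Γ' : Subgroup G) (hfi : Γ'.relIndex Γ ≠ 0)
    (hfree : ∀ γ ∈ Γ', ∀ v : V, γ • v = v → γ = 1)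
    (F : Set G)
    (hFdom : IsFundamentalDomain Γ.op F μG)
    (μ : Measure (G ⧸ Γ))
    (hμ : μ = Measure.map (QuotientGroup.mk : G → G ⧸ Γ) (μG.restrict F))
    (v₀ : V) (Atil : Set V) (hinv : ∀ γ : Γ, (γ : G) • Atil = Atil)
    (hAinf : ((Quotient.mk (MulAction.orbitRel Γ V)) '' Atil).Infinite)
    (hAcinf : ((Quotient.mk (MulAction.orbitRel Γ V)) '' Atilᶜ).Infinite) :
    μ ((QuotientGroup.mk : G → G ⧸ Γ) '' {g : G | g⁻¹ • v₀ ∈ Atil}) = ⊤ ∧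
    μ (((QuotientGroup.mk : G → G ⧸ Γ) '' {g : G | g⁻¹ • v₀ ∈ Atil})ᶜ) = ⊤ := by
  have : Countable Γ := TopologicalSpace.separableSpace_iff_countable.1 inferInstance
  have hE : ∀ γ : Γ, (· * (γ : G)) ⁻¹' {g : G | g⁻¹ • v₀ ∈ Atil} = {g | g⁻¹ • v₀ ∈ Atil} := by
    intro γ
    ext g
    simp only [mem_preimage, mem_ofPred_eq, mul_inv_rev, mul_smul]
    conv_lhs => rw [← hinv γ⁻¹]
    rw [Subgroup.coe_inv, smul_mem_smul_set_iff]
  subst hμ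
  exact ⟨measure_image_mk_setOf_inv_smul_mem_eq_top (hstab v₀).2 hfi hfree hFdom hAinf,
    QuotientGroup.image_mk_compl hE ▸
      measure_image_mk_setOf_inv_smul_mem_eq_top (hstab v₀).2 hfi hfree hFdom hAcinf⟩

theorem stmt13 {G V : Type*} [Group G] [TopologicalSpace G] [IsTopologicalGroup G]
    [LocallyCompactSpace G] [SecondCountableTopology G]
    [MeasurableSpace G] [BorelSpace G]
    (μG : Measure G) [μG.IsHaarMeasure] [μG.IsMulRightInvariant]
    (X : SimpleGraph V) (hconn : X.Connected) (hlf : X.LocallyFinite)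
    [MulAction G V]
    (hauto : ∀ (g : G) (v w : V), X.Adj v w → X.Adj (g • v) (g • w))
    [MulAction.IsPretransitive G V]
    (hstab : ∀ v : V, IsCompact {g : G | g • v = v} ∧ IsOpen {g : G | g • v = v})
    (Γ : Subgroup G) [DiscreteTopology Γ]
    (Γ' : Subgroup G) (hle : Γ' ≤ Γ) (hfi : Γ'.relIndex Γ ≠ 0)
    (hfree : ∀ γ ∈ Γ', ∀ v : V, γ • v = v → γ = 1)
    (F : Set G) (hFmeas : MeasurableSet F)
    (hFdom : IsFundamentalDomain Γ.op F μG)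
    (μ : Measure (G ⧸ Γ))
    (hμ : μ = Measure.map (QuotientGroup.mk : G → G ⧸ Γ) (μG.restrict F))
    [SMulInvariantMeasure G (G ⧸ Γ) μ]
    (v₀ : V) (Atil : Set V) (hinv : ∀ γ : Γ, (γ : G) • Atil = Atil)
    (hAinf : ((Quotient.mk (MulAction.orbitRel Γ V)) '' Atil).Infinite)
    (hAcinf : ((Quotient.mk (MulAction.orbitRel Γ V)) '' Atilᶜ).Infinite) :
    μ ((QuotientGroup.mk : G → G ⧸ Γ) '' {g : G | g⁻¹ • v₀ ∈ Atil}) = ⊤ ∧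
    μ (((QuotientGroup.mk : G → G ⧸ Γ) '' {g : G | g⁻¹ • v₀ ∈ Atil})ᶜ) = ⊤ :=
  stmt13_general μG hstab Γ Γ' hfi hfree F hFdom μ hμ v₀ Atil hinv hAinf hAcinf
end

section
/- Let Γ be a countable discrete group generated by a finite symmetric set S, and let Λ ≤ Γ be a subgroup. Let ℓ²(Γ/Λ) denote the Hilbert space of square-summable complex functions on the left-coset space Γ/Λ, with Γ acting unitarily by (γ·f)(xΛ) = f(γ⁻¹xΛ). Assume: (i) there exist a finite subset Q ⊆ Γ and a constant C > 0 such that ‖f‖₂ ≤ C · max_{γ∈Q} ‖γ·f − f‖₂ for every f ∈ ℓ²(Γ/Λ) (i.e., Λ is not coamenable in Γ); and (ii) every 1-cocycle c : Γ → ℓ²(Γ/Λ) is a 1-coboundary. Then the Schreier graph Sch(Γ, Λ, S) has exactly one end: its space of ends is nonempty and has exactly one element. -/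
open MeasureTheory Set Pointwise

/-- The Schreier graph `Sch(Γ, Λ, S)`: vertices are the left cosets `Γ ⧸ Λ`, with two distinct
cosets `x` and `y` adjacent if and only if `y = s • x` for some `s ∈ S`. -/
def schreierGraph {Γ : Type*} [Group Γ] (Λ : Subgroup Γ) (S : Set Γ)
    (hS : ∀ s ∈ S, s⁻¹ ∈ S) : SimpleGraph (Γ ⧸ Λ) where
  Adj x y := x ≠ y ∧ ∃ s ∈ S, y = s • x
  symm := by
    constructor
    rintro x y ⟨hxy, s, hs, rfl⟩
    exact ⟨hxy.symm, s⁻¹, hS s hs, (inv_smul_smul s x).symm⟩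
  loopless := by
    constructor
    rintro x ⟨h, -⟩
    exact h rfl

/-!
A component `C` of the Schreier graph minus a finite set `K` is moved by each generator only
inside `K ∪ s • K`, so `γ • C ∆ C` is finite for every `γ`. The indicator of `C` therefore
defines an `ℓ²` cocycle `γ ↦ 1_C - γ • 1_C`, which is a coboundary `ξ - γ • ξ`. Then `1_C - ξ`
is invariant, hence constant by transitivity, and as `ξ ∈ ℓ²` tends to zero at infinity, `C` is
finite or cofinite, whereas two distinct ends would give two disjoint infinite components. A
spectral gap excludes invariant vectors, so the coset space is infinite and, by König's lemma,
the locally finite connected Schreier graph has an end.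
-/

open scoped symmDiff

section AlmostInvariant

variable {Γ α : Type*} [Group Γ] [MulAction Γ α]

def almostStabilizer (A : Set α) : Subgroup Γ where
  carrier := {γ | ((γ • A) ∆ A).Finite}
  one_mem' := by simp
  mul_mem' {γ δ} hγ hδ := by
    refine ((hδ.smul_set (a := γ)).union hγ).subset ?_
    rw [mul_smul, smul_set_symmDiff]
    exact symmDiff_triangle _ _ _
  inv_mem' {γ} hγ := by
    have : (γ⁻¹ • A) ∆ A = γ⁻¹ • (A ∆ (γ • A)) := by rw [smul_set_symmDiff, inv_smul_smul]
    rw [Set.mem_ofPred_eq, this, symmDiff_comm]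
    exact hγ.smul_set

lemma finite_smul_symmDiff_of_closure_eq_top {S : Set Γ} (hgen : Subgroup.closure S = ⊤)
    {A : Set α} (hS : ∀ s ∈ S, ((s • A) ∆ A).Finite) (γ : Γ) : ((γ • A) ∆ A).Finite :=
  (Subgroup.closure_le (almostStabilizer A)).2 hS (hgen ▸ Subgroup.mem_top γ)

end AlmostInvariant

lemma eq_zero_of_summable_sq_of_infinite_of_forall_eq {α E : Type*} [NormedAddCommGroup E]
    {ξ : α → E} (hξ : Summable fun x => ‖ξ x‖ ^ 2) {T : Set α} (hT : T.Infinite) {v : E}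
    (hv : ∀ t ∈ T, ξ t = v) : v = 0 := by
  by_contra hv0
  have hsmall : ∀ᶠ x in Filter.cofinite, ‖ξ x‖ ^ 2 < ‖v‖ ^ 2 :=
    hξ.tendsto_cofinite_zero.eventually_lt_const (by positivity)
  obtain ⟨t, hlt, ht⟩ := (hsmall.and_frequently hT.frequently_cofinite).exists
  exact (hv t ht ▸ hlt).false

section Cocycles

variable {Γ α : Type*} [Group Γ] [MulAction Γ α]

lemma infinite_of_spectral_gap [Nonempty α] (Q : Finset Γ) (C : ℝ)
    (hgap : ∀ f : α → ℂ, Summable (fun x => ‖f x‖ ^ 2) →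
      Real.sqrt (∑' x, ‖f x‖ ^ 2) ≤ C * ⨆ γ : Q, Real.sqrt (∑' x, ‖f ((γ : Γ)⁻¹ • x) - f x‖ ^ 2)) :
    Infinite α := by
  by_contra hfin
  have : Finite α := not_infinite_iff_finite.mp hfin
  -- the constant function is invariant but nonzero in `ℓ²`
  have h := hgap (fun _ => 1) Summable.of_finite
  simp only [norm_one, one_pow, tsum_const, nsmul_eq_mul, mul_one, sub_self, norm_zero, ne_eq,
    OfNat.ofNat_ne_zero, not_false_eq_true, zero_pow, tsum_zero, Real.sqrt_zero,
    Real.iSup_const_zero, mul_zero] at h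
  exact (Real.sqrt_pos.mpr (Nat.cast_pos.mpr Nat.card_pos)).not_ge h

variable (Γ α) in
-- `γ • f = f ∘ (γ⁻¹ • ·)` on `ℓ²(α)`, so `c (γ * δ) = c γ + γ • c δ` reads pointwise as below
def L2OneCocyclesAreCoboundaries : Prop :=
  ∀ c : Γ → α → ℂ, (∀ γ, Summable (fun x => ‖c γ x‖ ^ 2)) →
    (∀ γ δ : Γ, ∀ x, c (γ * δ) x = c γ x + c δ (γ⁻¹ • x)) →
    ∃ ξ : α → ℂ, Summable (fun x => ‖ξ x‖ ^ 2) ∧ ∀ γ x, c γ x = ξ x - ξ (γ⁻¹ • x)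

lemma exists_summable_sq_indicator_sub_eq_const [MulAction.IsPretransitive Γ α]
    (hcob : L2OneCocyclesAreCoboundaries Γ α) {A : Set α}
    (hA : ∀ γ : Γ, ((γ • A) ∆ A).Finite) :
    ∃ ξ : α → ℂ, Summable (fun x => ‖ξ x‖ ^ 2) ∧ ∃ k, ∀ x, A.indicator 1 x - ξ x = k := by
  classical
  set f : α → ℂ := A.indicator 1
  have hsupp (γ : Γ) : (Function.support fun x => ‖f x - f (γ⁻¹ • x)‖ ^ 2) ⊆ (γ • A) ∆ A := by
    refine Function.support_subset_iff'.mpr fun x hxA => ?_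
    have hmem : x ∈ A ↔ γ⁻¹ • x ∈ A := by
      rw [← Set.mem_smul_set_iff_inv_smul_mem]
      simp only [Set.mem_symmDiff, not_or, not_and, not_not] at hxA
      exact ⟨hxA.2, hxA.1⟩
    simp only [f, Set.indicator_apply, hmem, Pi.one_apply, sub_self, norm_zero, ne_eq,
      OfNat.ofNat_ne_zero, not_false_eq_true, zero_pow]
  obtain ⟨ξ, hξ, hfξ⟩ := hcob (fun γ x => f x - f (γ⁻¹ • x))
    (fun γ => summable_of_hasFiniteSupport ((hA γ).subset (hsupp γ)))
    (fun γ δ x => by rw [mul_inv_rev, mul_smul]; ring)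
  refine ⟨ξ, hξ, ?_⟩
  obtain _ | ⟨⟨x₀⟩⟩ := isEmpty_or_nonempty α
  · exact ⟨0, isEmptyElim⟩
  refine ⟨f x₀ - ξ x₀, fun x => ?_⟩
  -- `f - ξ` is `Γ`-invariant
  obtain ⟨γ, rfl⟩ := MulAction.exists_smul_eq Γ x₀ x
  have h := hfξ γ (γ • x₀)
  rw [inv_smul_smul] at h
  linear_combination h

lemma finite_or_finite_compl_of_coboundary [MulAction.IsPretransitive Γ α]
    (hcob : L2OneCocyclesAreCoboundaries Γ α) {A : Set α}
    (hA : ∀ γ : Γ, ((γ • A) ∆ A).Finite) : A.Finite ∨ Aᶜ.Finite := by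
  obtain ⟨ξ, hξ, k, hk⟩ := exists_summable_sq_indicator_sub_eq_const hcob hA
  by_contra! hinf
  have h₁ : 1 - k = 0 := eq_zero_of_summable_sq_of_infinite_of_forall_eq hξ hinf.1 fun x hx => by
    have h := hk x
    rw [Set.indicator_of_mem hx, Pi.one_apply] at h
    linear_combination -h
  have h₀ : -k = 0 := eq_zero_of_summable_sq_of_infinite_of_forall_eq hξ hinf.2 fun x hx => by
    have h := hk x
    rw [Set.indicator_of_notMem hx] at h
    linear_combination -h
  exact one_ne_zero (by linear_combination h₁ - h₀ : (1 : ℂ) = 0)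

end Cocycles

namespace SimpleGraph

variable {V : Type*} {G : SimpleGraph V}

-- Mathlib has these as `end_componentCompl_infinite` and `nonempty_ends_of_infinite`, but only
-- for `V : Type`
lemma end_apply_supp_infinite (e : G.end) (K : (Finset V)ᵒᵖ) : (e.val K).supp.Infinite := by
  refine (e.val K).infinite_iff_in_all_ranges.mpr fun L h => ?_
  exact ⟨e.val (Opposite.op L), e.prop (CategoryTheory.opHomOfLE h)⟩

lemma end_nonempty_of_infinite [G.LocallyFinite] [Fact G.Preconnected] [Infinite V] :
    G.end.Nonempty := by
  have (K : (Finset V)ᵒᵖ) : Finite (G.componentComplFunctor.obj K) :=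
    G.componentCompl_finite K.unop
  have (K : (Finset V)ᵒᵖ) : Nonempty (G.componentComplFunctor.obj K) :=
    G.componentCompl_nonempty_of_infinite K.unop
  exact nonempty_sections_of_finite_inverse_system G.componentComplFunctor

lemma end_subsingleton_of_finite_or_finite_compl
    (h : ∀ (K : Finset V) (C : G.ComponentCompl K), C.supp.Finite ∨ C.suppᶜ.Finite) :
    G.end.Subsingleton := by
  intro e₁ he₁ e₂ he₂
  by_contra hne
  obtain ⟨K, hK⟩ := Function.ne_iff.mp hne
  have h₁ := end_apply_supp_infinite ⟨e₁, he₁⟩ K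
  have h₂ := end_apply_supp_infinite ⟨e₂, he₂⟩ K
  refine (h K.unop (e₁ K)).elim h₁ fun hc => h₂ (hc.subset ?_)
  exact Set.subset_compl_iff_disjoint_right.mpr (ComponentCompl.pairwise_disjoint hK.symm)

end SimpleGraph

namespace schreierGraph

variable {Γ : Type*} [Group Γ] {Λ : Subgroup Γ} {S : Set Γ} {hS : ∀ s ∈ S, s⁻¹ ∈ S}

lemma adj_smul {s : Γ} (hs : s ∈ S) {x : Γ ⧸ Λ} (hx : s • x ≠ x) :
    (schreierGraph Λ S hS).Adj x (s • x) :=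
  ⟨hx.symm, s, hs, rfl⟩

lemma reachable_smul (hgen : Subgroup.closure S = ⊤) (γ : Γ) (x : Γ ⧸ Λ) :
    (schreierGraph Λ S hS).Reachable x (γ • x) := by
  have hγ : γ ∈ Subgroup.closure S := hgen ▸ Subgroup.mem_top γ
  induction hγ using Subgroup.closure_induction generalizing x with
  | mem s hs =>
    by_cases hsx : s • x = x
    · rw [hsx]
    · exact (adj_smul hs hsx).reachable
  | one => rw [one_smul]
  | mul a b _ _ ha hb => rw [mul_smul]; exact (hb x).trans (ha (b • x))
  | inv a _ ha => simpa using (ha (a⁻¹ • x)).symm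

lemma preconnected (hgen : Subgroup.closure S = ⊤) : (schreierGraph Λ S hS).Preconnected :=
  fun x y => by
    obtain ⟨γ, rfl⟩ := MulAction.exists_smul_eq Γ x y
    exact reachable_smul hgen γ x

noncomputable instance [Finite S] : (schreierGraph Λ S hS).LocallyFinite := fun x =>
  ((Set.toFinite S).image (· • x)).subset (by rintro _ ⟨-, s, hs, rfl⟩; exact ⟨s, hs, rfl⟩)
    |>.fintype

lemma mem_componentCompl_smul_iff {K : Finset (Γ ⧸ Λ)}
    (C : (schreierGraph Λ S hS).ComponentCompl K) {s : Γ} (hs : s ∈ S) {x : Γ ⧸ Λ}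
    (hx : x ∉ K) (hsx : s • x ∉ K) : x ∈ C ↔ s • x ∈ C := by
  by_cases hfix : s • x = x
  · rw [hfix]
  · exact ⟨fun h => C.mem_of_adj x _ h hsx (adj_smul hs hfix),
      fun h => C.mem_of_adj _ x h hx (adj_smul hs hfix).symm⟩

lemma smul_componentCompl_symmDiff_subset {K : Finset (Γ ⧸ Λ)}
    (C : (schreierGraph Λ S hS).ComponentCompl K) {s : Γ} (hs : s ∈ S) :
    (s • C.supp) ∆ C.supp ⊆ s • (K : Set (Γ ⧸ Λ)) ∪ K := by
  intro x hx
  by_contra hxK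
  simp only [Set.mem_union, not_or, Set.mem_smul_set_iff_inv_smul_mem] at hxK
  have h := mem_componentCompl_smul_iff C (hS s hs) hxK.2 hxK.1
  simp only [Set.mem_symmDiff, Set.mem_smul_set_iff_inv_smul_mem] at hx
  tauto

end schreierGraph

theorem stmt16_general {Γ : Type*} [Group Γ]
    (S : Finset Γ) (hSsym : ∀ s ∈ (S : Set Γ), s⁻¹ ∈ (S : Set Γ))
    (hSgen : Subgroup.closure (S : Set Γ) = ⊤)
    (Λ : Subgroup Γ)
    (hgap : ∃ Q : Finset Γ, ∃ C : ℝ, 0 < C ∧ ∀ f : Γ ⧸ Λ → ℂ,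
      Summable (fun x => ‖f x‖ ^ 2) →
      Real.sqrt (∑' x, ‖f x‖ ^ 2)
        ≤ C * ⨆ γ : Q, Real.sqrt (∑' x, ‖f ((γ : Γ)⁻¹ • x) - f x‖ ^ 2))
    (hcoboundary : ∀ c : Γ → Γ ⧸ Λ → ℂ, (∀ γ, Summable (fun x => ‖c γ x‖ ^ 2)) →
      (∀ γ δ : Γ, ∀ x, c (γ * δ) x = c γ x + c δ (γ⁻¹ • x)) →
      ∃ ξ : Γ ⧸ Λ → ℂ, Summable (fun x => ‖ξ x‖ ^ 2) ∧ ∀ γ x, c γ x = ξ x - ξ (γ⁻¹ • x)) :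
    (schreierGraph Λ (S : Set Γ) hSsym).end.Nonempty ∧
    (schreierGraph Λ (S : Set Γ) hSsym).end.Subsingleton := by
  have : Fact (schreierGraph Λ (S : Set Γ) hSsym).Preconnected :=
    ⟨schreierGraph.preconnected hSgen⟩
  obtain ⟨Q, C, -, hgap⟩ := hgap
  have : Infinite (Γ ⧸ Λ) := infinite_of_spectral_gap Q C hgap
  refine ⟨SimpleGraph.end_nonempty_of_infinite,
    SimpleGraph.end_subsingleton_of_finite_or_finite_compl fun K D => ?_⟩
  refine finite_or_finite_compl_of_coboundary hcoboundary
    (finite_smul_symmDiff_of_closure_eq_top hSgen fun s hs => ?_)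
  exact (K.finite_toSet.smul_set.union K.finite_toSet).subset
    (schreierGraph.smul_componentCompl_symmDiff_subset D hs)

theorem stmt16 {Γ : Type*} [Group Γ] [Countable Γ]
    (S : Finset Γ) (hSsym : ∀ s ∈ (S : Set Γ), s⁻¹ ∈ (S : Set Γ))
    (hSgen : Subgroup.closure (S : Set Γ) = ⊤)
    (Λ : Subgroup Γ)
    (hgap : ∃ Q : Finset Γ, ∃ C : ℝ, 0 < C ∧ ∀ f : Γ ⧸ Λ → ℂ,
      Summable (fun x => ‖f x‖ ^ 2) →
      Real.sqrt (∑' x, ‖f x‖ ^ 2)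
        ≤ C * ⨆ γ : Q, Real.sqrt (∑' x, ‖f ((γ : Γ)⁻¹ • x) - f x‖ ^ 2))
    (hcoboundary : ∀ c : Γ → Γ ⧸ Λ → ℂ, (∀ γ, Summable (fun x => ‖c γ x‖ ^ 2)) →
      (∀ γ δ : Γ, ∀ x, c (γ * δ) x = c γ x + c δ (γ⁻¹ • x)) →
      ∃ ξ : Γ ⧸ Λ → ℂ, Summable (fun x => ‖ξ x‖ ^ 2) ∧ ∀ γ x, c γ x = ξ x - ξ (γ⁻¹ • x)) :
    (schreierGraph Λ (S : Set Γ) hSsym).end.Nonempty ∧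
    (schreierGraph Λ (S : Set Γ) hSsym).end.Subsingleton :=
  stmt16_general S hSsym hSgen Λ hgap hcoboundary
end

section
/- Let G be a unimodular locally compact second countable group with Haar measure μ_G, let Γ ≤ G be a discrete subgroup, let F ⊆ G be a Borel fundamental domain for the right translation action of Γ on G, and let μ denote the resulting G-invariant quotient measure on G/Γ. Let U ⊆ G be an open neighborhood of the identity with μ_G(U ∩ F) > 0 such that for every x ∈ G/Γ the map g ↦ g·x is injective on U. Then for every x ∈ G/Γ one has μ(U·x) ≥ μ_G(U ∩ F); in particular the μ-measure of the U-orbit patch U·x is bounded below by a positive constant independent of x. -/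
/-!
Write `x = g₀Γ`. The patch `U·x` is the image in `G/Γ` of `V = U g₀`, and injectivity of
`g ↦ g·x` on `U` says that the quotient map is injective on `V`, i.e. the translates `Vγ`,
`γ ∈ Γ`, are pairwise disjoint. Their union is the full preimage of the patch, so unfolding
the quotient measure, `μ(U·x) = ∑_γ μ_G(Vγ ∩ F) = μ_G(V)`, the last step because `F` is a
fundamental domain. Right invariance gives `μ_G(V) = μ_G(U) ≥ μ_G(U ∩ F)`.
-/

open MeasureTheory Set Pointwise Function

namespace QuotientGroup

variable {G : Type*} [Group G] {Γ : Subgroup G}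

theorem preimage_image_mk_eq_iUnion_op_smul (V : Set G) :
    (mk : G → G ⧸ Γ) ⁻¹' (mk '' V) = ⋃ γ : Γ.op, γ • V := by
  rw [preimage_image_mk_eq_iUnion_image]
  refine iUnion_congr_of_surjective _ Γ.equivOp.surjective fun γ => ?_
  ext a
  simp only [mem_image, mem_smul_set, Subgroup.smul_def, MulOpposite.smul_eq_mul_unop]
  rfl

theorem pairwise_disjoint_op_smul_of_injOn_mk {V : Set G} (hV : InjOn (mk : G → G ⧸ Γ) V) :
    Pairwise (Disjoint on fun γ : Γ.op => γ • V) := by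
  intro γ₁ γ₂ hne
  refine disjoint_left.2 ?_
  rintro _ ⟨v₁, hv₁, rfl⟩ ⟨v₂, hv₂, heq⟩
  simp only [Subgroup.smul_def, MulOpposite.smul_eq_mul_unop] at heq
  obtain rfl : v₂ = v₁ := hV hv₂ hv₁ <| by
    rw [← mk_mul_of_mem v₂ γ₂.2, heq, mk_mul_of_mem v₁ γ₁.2]
  exact hne (Subtype.ext (MulOpposite.unop_injective (mul_left_cancel heq)).symm)

end QuotientGroup

namespace MeasureTheory.IsFundamentalDomain

variable {G : Type*} [Group G] [MeasurableSpace G] [MeasurableMul G] {Γ : Subgroup G}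
  [Countable Γ] {μ : Measure G} [μ.IsMulRightInvariant] {F : Set G}

theorem map_mk_restrict_image_eq_of_injOn (hF : IsFundamentalDomain Γ.op F μ) {V : Set G}
    (hVm : MeasurableSet V) (hV : InjOn (QuotientGroup.mk : G → G ⧸ Γ) V) :
    (μ.restrict F).map (QuotientGroup.mk : G → G ⧸ Γ) (QuotientGroup.mk '' V) = μ V := by
  have hsmul : ∀ γ : Γ.op, MeasurableSet (γ • V) := fun γ => hVm.const_smul γ
  have hpre : MeasurableSet ((QuotientGroup.mk : G → G ⧸ Γ) ⁻¹' (QuotientGroup.mk '' V)) := by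
    rw [QuotientGroup.preimage_image_mk_eq_iUnion_op_smul]
    exact .iUnion hsmul
  calc (μ.restrict F).map QuotientGroup.mk (QuotientGroup.mk '' V)
        = μ.restrict F (⋃ γ : Γ.op, γ • V) := by
        rw [Measure.map_apply measurable_quotient_mk'' (measurableSet_quotient.2 hpre),
          QuotientGroup.preimage_image_mk_eq_iUnion_op_smul]
    _ = ∑' γ : Γ.op, μ.restrict F (γ • V) :=
        measure_iUnion (QuotientGroup.pairwise_disjoint_op_smul_of_injOn_mk hV) hsmul
    _ = ∑' γ : Γ.op, μ (γ • V ∩ F) := by simp only [Measure.restrict_apply (hsmul _)]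
    _ = μ V := (hF.measure_eq_tsum V).symm

end MeasureTheory.IsFundamentalDomain

theorem stmt19_general {G : Type*} [Group G] [TopologicalSpace G] [IsTopologicalGroup G]
    [SecondCountableTopology G]
    [MeasurableSpace G] [BorelSpace G]
    (μG : Measure G) [μG.IsMulRightInvariant]
    (Γ : Subgroup G) [DiscreteTopology Γ]
    (F : Set G)
    (hFdom : IsFundamentalDomain Γ.op F μG)
    (μ : Measure (G ⧸ Γ))
    (hμ : μ = Measure.map (QuotientGroup.mk : G → G ⧸ Γ) (μG.restrict F))
    (U : Set G) (hUopen : IsOpen U)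
    (hUinj : ∀ x : G ⧸ Γ, Set.InjOn (fun g => g • x) U) :
    ∀ x : G ⧸ Γ, μG (U ∩ F) ≤ μ ((fun g => g • x) '' U) := by
  intro x
  obtain ⟨g₀, rfl⟩ := QuotientGroup.mk_surjective x
  have : Countable Γ := countable_of_Lindelof_of_discrete
  have horbit : (fun g => g • (g₀ : G ⧸ Γ)) '' U = QuotientGroup.mk '' ((· * g₀) '' U) := by
    rw [image_image]; rfl
  rw [hμ, horbit, hFdom.map_mk_restrict_image_eq_of_injOn
    (isOpenMap_mul_right g₀ U hUopen).measurableSet (hUinj g₀).image_of_comp,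
    image_mul_right, measure_preimage_mul_right]
  exact measure_mono inter_subset_left

theorem stmt19 {G : Type*} [Group G] [TopologicalSpace G] [IsTopologicalGroup G]
    [LocallyCompactSpace G] [SecondCountableTopology G]
    [MeasurableSpace G] [BorelSpace G]
    (μG : Measure G) [μG.IsHaarMeasure] [μG.IsMulRightInvariant]
    (Γ : Subgroup G) [DiscreteTopology Γ]
    (F : Set G) (hFmeas : MeasurableSet F)
    (hFdom : IsFundamentalDomain Γ.op F μG)
    (μ : Measure (G ⧸ Γ))
    (hμ : μ = Measure.map (QuotientGroup.mk : G → G ⧸ Γ) (μG.restrict F))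
    [SMulInvariantMeasure G (G ⧸ Γ) μ]
    (U : Set G) (hUopen : IsOpen U) (hUone : (1 : G) ∈ U)
    (hUF : 0 < μG (U ∩ F))
    (hUinj : ∀ x : G ⧸ Γ, Set.InjOn (fun g => g • x) U) :
    ∀ x : G ⧸ Γ, μG (U ∩ F) ≤ μ ((fun g => g • x) '' U) :=
  stmt19_general μG Γ F hFdom μ hμ U hUopen hUinj
end
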